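/- arXiv:1902.03366 — 9 statements merged into one kernel-verified Lean document; each statement's English description precedes it below -/
import Mathlib

section
/- DT bound for almost-lossless source coding: Let X be a random variable with distribution P_X on a countable alphabet 𝒳 and let M be a positive integer. Then there exists an (M, ε) code for X (i.e., an encoder f : 𝒳 → {1,…,M} and decoder g : {1,…,M} → 𝒳) whose error probability satisfies ε ≤ E[ exp( − max{0, log M − ı(X)} ) ]; moreover the right-hand side equals P[ P_X(X) < 1/M ] + (1/M) · |{ x ∈ 𝒳 : P_X(x) ≥ 1/M }|. -/
private lemma dt_term_eq (M : ℕ) (hM : 0 < M) (p : ℝ) (hp : 0 ≤ p) :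
    p * Real.exp (-(max 0 (Real.log (M : ℝ) - Real.log (1 / p))))
      = if p < 1 / (M : ℝ) then p else 1 / (M : ℝ) := by
  have hM' : (0 : ℝ) < M := by exact_mod_cast hM
  rcases eq_or_lt_of_le hp with h0 | hp'
  · rw [← h0]
    rw [if_pos (by positivity)]
    ring
  · have hlog : Real.log (M : ℝ) - Real.log (1 / p) = Real.log ((M : ℝ) * p) := by
      rw [Real.log_div one_ne_zero (ne_of_gt hp'), Real.log_one,
        Real.log_mul (ne_of_gt hM') (ne_of_gt hp')]
      ring
    rw [hlog]
    by_cases h : p < 1 / (M : ℝ)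
    · have hlt : (M : ℝ) * p < 1 := by
        rw [lt_div_iff₀ hM'] at h; linarith
      have hneg : Real.log ((M : ℝ) * p) < 0 := Real.log_neg (by positivity) hlt
      rw [max_eq_left hneg.le, if_pos h]
      simp
    · push_neg at h
      have h1 : 1 ≤ (M : ℝ) * p := by
        rw [div_le_iff₀ hM'] at h; linarith
      rw [max_eq_right (Real.log_nonneg h1), if_neg (not_lt.2 h),
        Real.exp_neg, Real.exp_log (by positivity)]
      field_simp

/-- **DT bound for almost-lossless source coding.**
There exists an `(M, ε)` code (encoder `f`, decoder `g`) whose error probability is at most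
`E[exp(−|log M − ı(X)|₊)]`, and this bound equals
`P[P_X(X) < 1/M] + (1/M)·|{x : P_X(x) ≥ 1/M}|`. -/
theorem dt_bound {𝒳 : Type*} [Countable 𝒳] [DecidableEq 𝒳]
    (P : 𝒳 → ℝ) (hP0 : ∀ x, 0 ≤ P x) (hP1 : ∑' x, P x = 1)
    (M : ℕ) (hM : 0 < M) :
    (∃ f : 𝒳 → Fin M, ∃ g : Fin M → 𝒳,
        (∑' x, if g (f x) = x then (0 : ℝ) else P x)
          ≤ ∑' x, P x * Real.exp (-(max 0 (Real.log (M : ℝ) - Real.log (1 / P x))))) ∧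
    (∑' x, P x * Real.exp (-(max 0 (Real.log (M : ℝ) - Real.log (1 / P x))))
        = (∑' x, if P x < 1 / (M : ℝ) then P x else 0)
          + (1 / (M : ℝ)) * ({x : 𝒳 | 1 / (M : ℝ) ≤ P x}.ncard : ℝ)) := by
  classical
  have hM' : (0 : ℝ) < M := by exact_mod_cast hM
  have hne : Nonempty 𝒳 := by
    by_contra h
    rw [not_nonempty_iff] at h
    rw [tsum_empty] at hP1
    norm_num at hP1
  have hSum : Summable P := by
    by_contra h
    rw [tsum_eq_zero_of_not_summable h] at hP1
    norm_num at hP1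
  -- The "large probability" set is finite.
  set S : Set 𝒳 := {x : 𝒳 | 1 / (M : ℝ) ≤ P x} with hSdef
  have hfin : S.Finite := by
    have := hSum.tendsto_cofinite_zero
    have hev : ∀ᶠ x in Filter.cofinite, P x < 1 / (M : ℝ) := by
      have : ∀ᶠ x in Filter.cofinite, P x ∈ Set.Iio (1 / (M : ℝ)) :=
        this (Iio_mem_nhds (by positivity))
      simpa using this
    have : {x : 𝒳 | ¬ P x < 1 / (M : ℝ)}.Finite := by
      simpa [Filter.eventually_cofinite] using hev
    refine this.subset ?_
    intro x hx
    simp only [Set.mem_setOf_eq, not_lt]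
    exact hx
  -- pointwise identity
  have hterm : ∀ x, P x * Real.exp (-(max 0 (Real.log (M : ℝ) - Real.log (1 / P x))))
      = if P x < 1 / (M : ℝ) then P x else 1 / (M : ℝ) :=
    fun x => dt_term_eq M hM (P x) (hP0 x)
  -- summability of the pieces
  have hs1 : Summable (fun x => if P x < 1 / (M : ℝ) then P x else 0) := by
    apply Summable.of_nonneg_of_le (fun x => ?_) (fun x => ?_) hSum
    · split <;> [exact hP0 x; exact le_rfl]
    · split <;> [exact le_rfl; exact hP0 x]
  have hs2 : Summable (fun x => if P x < 1 / (M : ℝ) then 0 else 1 / (M : ℝ)) := by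
    apply summable_of_ne_finset_zero (s := hfin.toFinset)
    intro x hx
    rw [if_pos]
    have : x ∉ S := by simpa [Set.Finite.mem_toFinset] using hx
    simpa [hSdef, not_le] using this
  -- second claim
  have hsecond : (∑' x, P x * Real.exp (-(max 0 (Real.log (M : ℝ) - Real.log (1 / P x)))))
      = (∑' x, if P x < 1 / (M : ℝ) then P x else 0)
        + (1 / (M : ℝ)) * (S.ncard : ℝ) := by
    have hsplit : ∀ x, (if P x < 1 / (M : ℝ) then P x else 1 / (M : ℝ))
        = (if P x < 1 / (M : ℝ) then P x else 0)
          + (if P x < 1 / (M : ℝ) then 0 else 1 / (M : ℝ)) := by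
      intro x; split <;> ring
    calc (∑' x, P x * Real.exp (-(max 0 (Real.log (M : ℝ) - Real.log (1 / P x)))))
        = ∑' x, ((if P x < 1 / (M : ℝ) then P x else 0)
            + (if P x < 1 / (M : ℝ) then 0 else 1 / (M : ℝ))) := by
          apply tsum_congr; intro x; rw [hterm x, hsplit x]
      _ = (∑' x, if P x < 1 / (M : ℝ) then P x else 0)
            + ∑' x, (if P x < 1 / (M : ℝ) then 0 else 1 / (M : ℝ)) := Summable.tsum_add hs1 hs2
      _ = (∑' x, if P x < 1 / (M : ℝ) then P x else 0) + (1 / (M : ℝ)) * (S.ncard : ℝ) := by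
          congr 1
          rw [tsum_eq_sum (s := hfin.toFinset) (by
            intro x hx
            rw [if_pos]
            have : x ∉ S := by simpa [Set.Finite.mem_toFinset] using hx
            simpa [hSdef, not_le] using this)]
          have : ∀ x ∈ hfin.toFinset, (if P x < 1 / (M : ℝ) then (0:ℝ) else 1 / (M : ℝ))
              = 1 / (M : ℝ) := by
            intro x hx
            rw [if_neg]
            have : x ∈ S := by simpa [Set.Finite.mem_toFinset] using hx
            exact not_lt.2 this
          rw [Finset.sum_congr rfl this, Finset.sum_const, nsmul_eq_mul,
            Set.ncard_eq_toFinset_card S hfin]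
          ring
  constructor
  · -- construct the code
    have hcard : hfin.toFinset.card ≤ M := by
      by_contra h
      push_neg at h
      have hsum_le : ∑ x ∈ hfin.toFinset, P x ≤ 1 :=
        hP1 ▸ Summable.sum_le_tsum _ (fun x _ => hP0 x) hSum
      have hlow : hfin.toFinset.card • (1 / (M : ℝ)) ≤ ∑ x ∈ hfin.toFinset, P x := by
        apply Finset.card_nsmul_le_sum
        intro x hx
        have : x ∈ S := by simpa [Set.Finite.mem_toFinset] using hx
        exact this
      rw [nsmul_eq_mul] at hlow
      have hMc : (M : ℝ) < hfin.toFinset.card := by exact_mod_cast h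
      have : (hfin.toFinset.card : ℝ) * (1 / (M : ℝ)) > 1 := by
        rw [gt_iff_lt, ← div_lt_iff₀ (by positivity)]
        simpa [one_div, div_eq_mul_inv] using hMc
      linarith
    obtain ⟨e⟩ : Nonempty (↥hfin.toFinset ↪ Fin M) := by
      apply Function.Embedding.nonempty_of_card_le
      simpa [Fintype.card_coe] using hcard
    refine ⟨fun x => if h : x ∈ hfin.toFinset then e ⟨x, h⟩ else ⟨0, hM⟩,
      fun i => if h : ∃ y : ↥hfin.toFinset, e y = i then (h.choose : 𝒳)
        else Classical.arbitrary 𝒳, ?_⟩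
    set f : 𝒳 → Fin M := fun x => if h : x ∈ hfin.toFinset then e ⟨x, h⟩ else ⟨0, hM⟩ with hf
    set g : Fin M → 𝒳 := fun i => if h : ∃ y : ↥hfin.toFinset, e y = i then (h.choose : 𝒳)
        else Classical.arbitrary 𝒳 with hg
    have hcode : ∀ x ∈ hfin.toFinset, g (f x) = x := by
      intro x hx
      have hfx : f x = e ⟨x, hx⟩ := by simp only [hf]; exact dif_pos hx
      have hex : ∃ y : ↥hfin.toFinset, e y = f x := ⟨⟨x, hx⟩, hfx.symm⟩
      have h1 : g (f x) = (hex.choose : 𝒳) := by simp only [hg]; exact dif_pos hex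
      rw [h1]
      have h2 : e hex.choose = e ⟨x, hx⟩ := hex.choose_spec.trans hfx
      exact congrArg Subtype.val (e.injective h2)
    have hsumR : Summable (fun x => if P x < 1 / (M : ℝ) then P x else 1 / (M : ℝ)) := by
      refine (hs1.add hs2).congr ?_
      intro x
      by_cases h : P x < 1 / (M : ℝ)
      · simp only [if_pos h]; ring
      · simp only [if_neg h]; ring
    have hsumL : Summable (fun x => if g (f x) = x then (0 : ℝ) else P x) := by
      apply Summable.of_nonneg_of_le (fun x => ?_) (fun x => ?_) hSum
      · split <;> [exact le_rfl; exact hP0 x]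
      · split <;> [exact hP0 x; exact le_rfl]
    calc (∑' x, if g (f x) = x then (0 : ℝ) else P x)
        ≤ ∑' x, (if P x < 1 / (M : ℝ) then P x else 1 / (M : ℝ)) := by
          apply Summable.tsum_le_tsum _ hsumL hsumR
          intro x
          by_cases hgx : g (f x) = x
          · rw [if_pos hgx]
            split <;> [exact hP0 x; positivity]
          · rw [if_neg hgx]
            have hxS : x ∉ hfin.toFinset := fun hx => hgx (hcode x hx)
            have : P x < 1 / (M : ℝ) := by
              by_contra hc
              exact hxS (by simpa [Set.Finite.mem_toFinset, hSdef] using not_lt.1 hc)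
            rw [if_pos this]
      _ = ∑' x, P x * Real.exp (-(max 0 (Real.log (M : ℝ) - Real.log (1 / P x)))) := by
          exact (tsum_congr hterm).symm
  · exact hsecond
end

section
/- RCU bound for almost-lossless source coding: Let X be a random variable with distribution P_X on a countable alphabet 𝒳 and let M be a positive integer. Then there exists an (M, ε) code for X whose error probability satisfies ε ≤ Σ_{x ∈ 𝒳} P_X(x) · min{ 1, (1/M) · |{ x̄ ∈ 𝒳 : P_X(x̄) ≥ P_X(x) }| }. -/
open Set Filter

private lemma finite_level_set {𝒳 : Type*} (P : 𝒳 → ℝ) (hsumm : Summable P)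
    (c : ℝ) (hc : 0 < c) : {y : 𝒳 | c ≤ P y}.Finite := by
  have h := hsumm.tendsto_cofinite_zero
  have h2 : ∀ᶠ y in cofinite, P y < c := h.eventually_lt_const hc
  rw [Filter.eventually_cofinite] at h2
  exact h2.subset (fun y hy => by simpa using not_lt.2 hy)

/-- **RCU bound for almost-lossless source coding.**
There exists an `(M, ε)` code whose error probability is at most
`Σ_x P_X(x) · min{1, (1/M)·|{x̄ : P_X(x̄) ≥ P_X(x)}|}`. -/
theorem rcu_bound {𝒳 : Type*} [Countable 𝒳] [DecidableEq 𝒳]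
    (P : 𝒳 → ℝ) (hP0 : ∀ x, 0 ≤ P x) (hP1 : ∑' x, P x = 1)
    (M : ℕ) (hM : 0 < M) :
    ∃ f : 𝒳 → Fin M, ∃ g : Fin M → 𝒳,
      (∑' x, if g (f x) = x then (0 : ℝ) else P x)
        ≤ ∑' x, P x * min 1 ((1 / (M : ℝ)) * ({y : 𝒳 | P x ≤ P y}.ncard : ℝ)) := by
  classical
  have hsumm : Summable P := by
    by_contra h
    rw [tsum_eq_zero_of_not_summable h] at hP1
    norm_num at hP1
  have hne : Nonempty 𝒳 := by
    by_contra h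
    rw [not_nonempty_iff] at h
    rw [tsum_empty (f := P)] at hP1 <;> simp_all
  haveI := hne
  haveI : Nonempty (Fin M) := ⟨⟨0, hM⟩⟩
  -- the set of "good" symbols
  set S : Set 𝒳 := {x | {y : 𝒳 | P x ≤ P y}.Finite ∧ {y : 𝒳 | P x ≤ P y}.ncard ≤ M} with hS
  -- any finset inside S has card ≤ M
  have key : ∀ T : Finset 𝒳, ↑T ⊆ S → T.card ≤ M := by
    intro T hT
    rcases T.eq_empty_or_nonempty with rfl | hTne
    · simpa using hM.le
    · obtain ⟨x0, hx0T, hx0min⟩ := T.exists_min_image P hTne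
      have hx0S : x0 ∈ S := hT hx0T
      have hsub : ↑T ⊆ {y : 𝒳 | P x0 ≤ P y} := fun y hy => hx0min y (by exact_mod_cast hy)
      calc T.card = (↑T : Set 𝒳).ncard := (Set.ncard_coe_finset T).symm
        _ ≤ {y : 𝒳 | P x0 ≤ P y}.ncard := Set.ncard_le_ncard hsub hx0S.1
        _ ≤ M := hx0S.2
  have hSfin : S.Finite := by
    by_contra h
    have h' : S.Infinite := h
    obtain ⟨T, hTsub, hTcard⟩ := h'.exists_subset_card_eq (M + 1)
    have := key T hTsub
    omega
  have hScard : hSfin.toFinset.card ≤ M := key _ (by simp)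
  -- build an injection from S into Fin M
  haveI := hSfin.fintype
  have hcard : Fintype.card S ≤ Fintype.card (Fin M) := by
    rw [Fintype.card_fin]
    rwa [Set.Finite.card_toFinset] at hScard
  obtain ⟨e⟩ := Function.Embedding.nonempty_of_card_le hcard
  refine ⟨fun x => if h : x ∈ S then e ⟨x, h⟩ else Classical.arbitrary _,
    fun i => if h : ∃ s : S, e s = i then (Classical.choose h : S).1 else Classical.arbitrary _, ?_⟩
  set f : 𝒳 → Fin M := fun x => if h : x ∈ S then e ⟨x, h⟩ else Classical.arbitrary _ with hf
  set g : Fin M → 𝒳 := fun i => if h : ∃ s : S, e s = i then (Classical.choose h : S).1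
    else Classical.arbitrary _ with hg
  have hdec : ∀ x ∈ S, g (f x) = x := by
    intro x hx
    have hfx : f x = e ⟨x, hx⟩ := by simp [hf, hx]
    have hex : ∃ s : S, e s = f x := ⟨⟨x, hx⟩, hfx.symm⟩
    have := Classical.choose_spec hex
    have h2 : Classical.choose hex = (⟨x, hx⟩ : S) := e.injective (by rw [this, hfx])
    calc g (f x) = ((Classical.choose hex : S) : 𝒳) := by rw [hg]; exact dif_pos hex
      _ = x := by rw [h2]
  -- pointwise bound
  have hpt : ∀ x, (if g (f x) = x then (0 : ℝ) else P x)
      ≤ P x * min 1 ((1 / (M : ℝ)) * ({y : 𝒳 | P x ≤ P y}.ncard : ℝ)) := by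
    intro x
    have hRHS0 : 0 ≤ P x * min 1 ((1 / (M : ℝ)) * ({y : 𝒳 | P x ≤ P y}.ncard : ℝ)) := by
      apply mul_nonneg (hP0 x)
      apply le_min zero_le_one
      positivity
    by_cases hgx : g (f x) = x
    · simpa [hgx] using hRHS0
    · rw [if_neg hgx]
      have hxS : x ∉ S := fun h => hgx (hdec x h)
      rcases eq_or_lt_of_le (hP0 x) with h0 | h0
      · simpa [← h0] using hRHS0
      · have hfin : {y : 𝒳 | P x ≤ P y}.Finite := finite_level_set P hsumm _ h0
        have hncard : M < {y : 𝒳 | P x ≤ P y}.ncard := by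
          by_contra hc
          exact hxS ⟨hfin, le_of_not_gt hc⟩
        have hmin : min 1 ((1 / (M : ℝ)) * ({y : 𝒳 | P x ≤ P y}.ncard : ℝ)) = 1 := by
          apply min_eq_left
          rw [div_mul_eq_mul_div, one_mul, le_div_iff₀ (by exact_mod_cast hM), one_mul]
          exact_mod_cast hncard.le
        rw [hmin, mul_one]
  -- summability of both sides
  have hs1 : Summable (fun x => if g (f x) = x then (0 : ℝ) else P x) := by
    apply hsumm.of_nonneg_of_le
    · intro x; split <;> simp [hP0]
    · intro x; split
      · exact hP0 x
      · exact le_rfl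
  have hs2 : Summable (fun x => P x * min 1 ((1 / (M : ℝ)) * ({y : 𝒳 | P x ≤ P y}.ncard : ℝ))) := by
    apply hsumm.of_nonneg_of_le
    · intro x
      apply mul_nonneg (hP0 x)
      apply le_min zero_le_one
      positivity
    · intro x
      calc P x * min 1 ((1 / (M : ℝ)) * ({y : 𝒳 | P x ≤ P y}.ncard : ℝ))
          ≤ P x * 1 := mul_le_mul_of_nonneg_left (min_le_left _ _) (hP0 x)
        _ = P x := mul_one _
  exact Summable.tsum_le_tsum hpt hs1 hs2
end

section
/- Composite hypothesis testing converse: Let P be a probability distribution and Q₁,…,Q_k measures on a countable alphabet 𝒳, each assigning finite mass to every singleton, and let α ∈ [0,1]. If (β₁,…,β_k) ∈ β_α(P,{Q_j}_{j=1}^k), then for all constants γ₁,…,γ_k ≥ 0: α − Σ_{j=1}^k γ_j·β_j ≤ P[ ⋂_{j=1}^k { P(X) ≥ γ_j·Q_j(X) } ]. -/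
/-- **Composite hypothesis testing, converse.**
If `(β₁,…,β_k) ∈ β_α(P, {Q_j})`, i.e. some randomized test `t : 𝒳 → [0,1]` satisfies
`P[Z=1] ≥ α` and `Q_j[Z=1] ≤ β_j` for all `j`, then for all `γ_j ≥ 0`:
`α − Σ_j γ_j β_j ≤ P[⋂_j {P(X) ≥ γ_j Q_j(X)}]`. -/
theorem cht_converse {𝒳 : Type*} [Countable 𝒳] (k : ℕ)
    (P : 𝒳 → ℝ) (hP0 : ∀ x, 0 ≤ P x) (hP1 : ∑' x, P x = 1)
    (Q : Fin k → 𝒳 → ℝ) (hQ0 : ∀ j x, 0 ≤ Q j x)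
    (α : ℝ) (hα : α ∈ Set.Icc (0 : ℝ) 1)
    (β : Fin k → ℝ)
    (hmem : ∃ t : 𝒳 → ℝ, (∀ x, t x ∈ Set.Icc (0 : ℝ) 1) ∧
        α ≤ ∑' x, P x * t x ∧
        ∀ j, Summable (fun x => Q j x * t x) ∧ (∑' x, Q j x * t x) ≤ β j) :
    ∀ γ : Fin k → ℝ, (∀ j, 0 ≤ γ j) →
      α - ∑ j, γ j * β j
        ≤ ∑' x, if ∀ j, γ j * Q j x ≤ P x then P x else 0 := by
  obtain ⟨t, ht, hαt, hQt⟩ := hmem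
  intro γ hγ
  -- summability of P
  have hPsumm : Summable P := by
    by_contra h
    rw [tsum_eq_zero_of_not_summable h] at hP1
    norm_num at hP1
  set f : 𝒳 → ℝ := fun x => if ∀ j, γ j * Q j x ≤ P x then P x else 0 with hf
  have hf0 : ∀ x, 0 ≤ f x := by
    intro x; simp only [hf]; split <;> simp [hP0 x]
  have hfle : ∀ x, f x ≤ P x := by
    intro x; simp only [hf]; split <;> simp [hP0 x]
  have hfsumm : Summable f := Summable.of_nonneg_of_le hf0 hfle hPsumm
  set g : 𝒳 → ℝ := fun x => ∑ j, γ j * (Q j x * t x) with hg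
  have hgsumm : Summable g :=
    summable_sum (fun j _ => ((hQt j).1.mul_left (γ j)))
  -- pointwise bound
  have hpt : ∀ x, P x * t x ≤ f x + g x := by
    intro x
    obtain ⟨ht0, ht1⟩ := ht x
    have hg0 : 0 ≤ g x := Finset.sum_nonneg fun j _ =>
      mul_nonneg (hγ j) (mul_nonneg (hQ0 j x) ht0)
    by_cases h : ∀ j, γ j * Q j x ≤ P x
    · have : f x = P x := by simp [hf, h]
      rw [this]
      have : P x * t x ≤ P x := by
        nlinarith [hP0 x]
      linarith
    · have hfx : f x = 0 := by simp [hf, h]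
      push_neg at h
      obtain ⟨j, hj⟩ := h
      have h1 : P x * t x ≤ γ j * (Q j x * t x) := by nlinarith
      have h2 : γ j * (Q j x * t x) ≤ g x :=
        Finset.single_le_sum (f := fun j => γ j * (Q j x * t x))
          (fun i _ => mul_nonneg (hγ i) (mul_nonneg (hQ0 i x) ht0)) (Finset.mem_univ j)
      rw [hfx]; linarith
  have hPtsumm : Summable (fun x => P x * t x) :=
    Summable.of_nonneg_of_le (fun x => mul_nonneg (hP0 x) (ht x).1)
      (fun x => by nlinarith [hP0 x, (ht x).1, (ht x).2]) hPsumm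
  have key : (∑' x, P x * t x) ≤ (∑' x, f x) + ∑' x, g x := by
    rw [← Summable.tsum_add hfsumm hgsumm]
    exact Summable.tsum_le_tsum hpt hPtsumm (hfsumm.add hgsumm)
  have hgval : (∑' x, g x) ≤ ∑ j, γ j * β j := by
    rw [hg, Summable.tsum_finsetSum (fun j _ => (hQt j).1.mul_left (γ j))]
    apply Finset.sum_le_sum
    intro j _
    rw [tsum_mul_left]
    exact mul_le_mul_of_nonneg_left (hQt j).2 (hγ j)
  have : α ≤ (∑' x, f x) + ∑ j, γ j * β j := le_trans hαt (le_trans key (by linarith))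
  linarith
end

section
/- Variational lemma for composite hypothesis testing: Let P be a probability distribution and Q₁,…,Q_k measures on a countable alphabet 𝒳, each assigning finite mass to every singleton, and let α ∈ [0,1]. If (β₁,…,β_k) ∈ β_α(P,{Q_j}_{j=1}^k), then for all constants γ₁,…,γ_k ≥ 0: α − Σ_{j=1}^k γ_j·β_j ≤ 1 − Σ_{x ∈ 𝒳} min{ P(x), Σ_{j=1}^k γ_j·Q_j(x) }. Moreover, for every choice of γ₁,…,γ_k ≥ 0 there exists a randomized test t (a generalized Neyman–Pearson test) for which P[Z=1] − Σ_{j=1}^k γ_j·Q_j[Z=1] = 1 − Σ_{x ∈ 𝒳} min{ P(x), Σ_{j=1}^k γ_j·Q_j(x) }. -/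
/-- **Variational lemma for composite hypothesis testing.**
If `(β₁,…,β_k) ∈ β_α(P, {Q_j})`, then for all `γ_j ≥ 0`:
`α − Σ_j γ_j β_j ≤ 1 − Σ_x min{P(x), Σ_j γ_j Q_j(x)}`; moreover, for every choice of
`γ_j ≥ 0` there is a randomized test `t` (a generalized Neyman–Pearson test) with
`P[Z=1] − Σ_j γ_j Q_j[Z=1] = 1 − Σ_x min{P(x), Σ_j γ_j Q_j(x)}`. -/
theorem cht_variational {𝒳 : Type*} [Countable 𝒳] (k : ℕ)
    (P : 𝒳 → ℝ) (hP0 : ∀ x, 0 ≤ P x) (hP1 : ∑' x, P x = 1)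
    (Q : Fin k → 𝒳 → ℝ) (hQ0 : ∀ j x, 0 ≤ Q j x)
    (α : ℝ) (hα : α ∈ Set.Icc (0 : ℝ) 1)
    (β : Fin k → ℝ)
    (hmem : ∃ t : 𝒳 → ℝ, (∀ x, t x ∈ Set.Icc (0 : ℝ) 1) ∧
        α ≤ ∑' x, P x * t x ∧
        ∀ j, Summable (fun x => Q j x * t x) ∧ (∑' x, Q j x * t x) ≤ β j) :
    (∀ γ : Fin k → ℝ, (∀ j, 0 ≤ γ j) →
      α - ∑ j, γ j * β j
        ≤ 1 - ∑' x, min (P x) (∑ j, γ j * Q j x)) ∧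
    ∀ γ : Fin k → ℝ, (∀ j, 0 ≤ γ j) →
      ∃ t : 𝒳 → ℝ, (∀ x, t x ∈ Set.Icc (0 : ℝ) 1) ∧
        (∑' x, P x * t x) - ∑ j, γ j * (∑' x, Q j x * t x)
          = 1 - ∑' x, min (P x) (∑ j, γ j * Q j x) := by
  have hPsum : Summable P := by
    by_contra h
    rw [tsum_eq_zero_of_not_summable h] at hP1
    norm_num at hP1
  have hmin0 : ∀ (γ : Fin k → ℝ), (∀ j, 0 ≤ γ j) → ∀ x,
      0 ≤ min (P x) (∑ j, γ j * Q j x) := fun γ hγ x =>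
    le_min (hP0 x) (Finset.sum_nonneg fun j _ => mul_nonneg (hγ j) (hQ0 j x))
  have hminsum : ∀ (γ : Fin k → ℝ), (∀ j, 0 ≤ γ j) →
      Summable (fun x => min (P x) (∑ j, γ j * Q j x)) := fun γ hγ =>
    hPsum.of_nonneg_of_le (hmin0 γ hγ) (fun x => min_le_left _ _)
  constructor
  · rintro γ hγ
    obtain ⟨t, ht, hαt, hQt⟩ := hmem
    have htP : Summable (fun x => P x * t x) :=
      hPsum.of_nonneg_of_le (fun x => mul_nonneg (hP0 x) (ht x).1)
        (fun x => by nlinarith [(ht x).1, (ht x).2, hP0 x])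
    have hγQt : ∀ j, Summable (fun x => γ j * (Q j x * t x)) :=
      fun j => ((hQt j).1).mul_left (γ j)
    have hsumQt : Summable (fun x => ∑ j, γ j * (Q j x * t x)) :=
      summable_sum (fun j _ => hγQt j)
    have hdiff : Summable (fun x => P x * t x - ∑ j, γ j * (Q j x * t x)) :=
      htP.sub hsumQt
    have h1 : ∑' x, (P x * t x - ∑ j, γ j * (Q j x * t x))
        ≤ ∑' x, (P x - min (P x) (∑ j, γ j * Q j x)) := by
      apply Summable.tsum_le_tsum _ hdiff (hPsum.sub (hminsum γ hγ))
      intro x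
      have hrw : ∑ j, γ j * (Q j x * t x) = (∑ j, γ j * Q j x) * t x := by
        rw [Finset.sum_mul]; exact Finset.sum_congr rfl fun j _ => by ring
      rw [hrw]
      rcases le_or_gt (P x) (∑ j, γ j * Q j x) with h | h
      · rw [min_eq_left h]
        nlinarith [(ht x).1, (ht x).2]
      · rw [min_eq_right h.le]
        nlinarith [(ht x).1, (ht x).2]
    have h2 : ∑' x, (P x * t x - ∑ j, γ j * (Q j x * t x))
        = (∑' x, P x * t x) - ∑ j, γ j * (∑' x, Q j x * t x) := by
      rw [Summable.tsum_sub htP hsumQt, Summable.tsum_finsetSum (fun j _ => hγQt j)]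
      congr 1
      exact Finset.sum_congr rfl fun j _ => (tsum_mul_left)
    have h3 : ∑' x, (P x - min (P x) (∑ j, γ j * Q j x))
        = 1 - ∑' x, min (P x) (∑ j, γ j * Q j x) := by
      rw [Summable.tsum_sub hPsum (hminsum γ hγ), hP1]
    rw [h2, h3] at h1
    have h4 : ∑ j, γ j * (∑' x, Q j x * t x) ≤ ∑ j, γ j * β j :=
      Finset.sum_le_sum fun j _ => mul_le_mul_of_nonneg_left (hQt j).2 (hγ j)
    linarith
  · rintro γ hγ
    set t : 𝒳 → ℝ := fun x => if P x ≤ ∑ j, γ j * Q j x then 0 else 1 with ht_def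
    have ht01 : ∀ x, t x ∈ Set.Icc (0 : ℝ) 1 := by
      intro x; by_cases h : P x ≤ ∑ j, γ j * Q j x <;> simp [ht_def, h]
    refine ⟨t, ht01, ?_⟩
    have hkey : ∀ x, P x * t x - ∑ j, γ j * (Q j x * t x)
        = P x - min (P x) (∑ j, γ j * Q j x) := by
      intro x
      have hrw : ∑ j, γ j * (Q j x * t x) = (∑ j, γ j * Q j x) * t x := by
        rw [Finset.sum_mul]; exact Finset.sum_congr rfl fun j _ => by ring
      rw [hrw]
      by_cases h : P x ≤ ∑ j, γ j * Q j x
      · simp [ht_def, h, min_eq_left h]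
      · push_neg at h
        simp [ht_def, not_le.mpr h, min_eq_right h.le]
    -- summability facts
    have hbound : ∀ x, ∑ j, γ j * (Q j x * t x) ≤ P x := by
      intro x
      by_cases h : P x ≤ ∑ j, γ j * Q j x
      · simp only [ht_def, if_pos h, mul_zero]
        simpa using hP0 x
      · push_neg at h
        simp only [ht_def, if_neg (not_le.mpr h), mul_one]
        exact h.le
    have hγQt : ∀ j, Summable (fun x => γ j * (Q j x * t x)) := by
      intro j
      apply hPsum.of_nonneg_of_le
        (fun x => mul_nonneg (hγ j) (mul_nonneg (hQ0 j x) (ht01 x).1))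
      intro x
      calc γ j * (Q j x * t x) ≤ ∑ i, γ i * (Q i x * t x) :=
            Finset.single_le_sum (f := fun i => γ i * (Q i x * t x))
              (fun i _ => mul_nonneg (hγ i) (mul_nonneg (hQ0 i x) (ht01 x).1))
              (Finset.mem_univ j)
        _ ≤ P x := hbound x
    have hsumQt : Summable (fun x => ∑ j, γ j * (Q j x * t x)) :=
      summable_sum (fun j _ => hγQt j)
    have htP : Summable (fun x => P x * t x) :=
      hPsum.of_nonneg_of_le (fun x => mul_nonneg (hP0 x) (ht01 x).1)
        (fun x => by nlinarith [(ht01 x).1, (ht01 x).2, hP0 x])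
    have h2 : ∑' x, (P x * t x - ∑ j, γ j * (Q j x * t x))
        = (∑' x, P x * t x) - ∑ j, γ j * (∑' x, Q j x * t x) := by
      rw [Summable.tsum_sub htP hsumQt, Summable.tsum_finsetSum (fun j _ => hγQt j)]
      congr 1
      exact Finset.sum_congr rfl fun j _ => (tsum_mul_left)
    rw [← h2]
    calc ∑' x, (P x * t x - ∑ j, γ j * (Q j x * t x))
        = ∑' x, (P x - min (P x) (∑ j, γ j * Q j x)) := by
          exact tsum_congr hkey
      _ = 1 - ∑' x, min (P x) (∑ j, γ j * Q j x) := by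
          rw [Summable.tsum_sub hPsum (hminsum γ hγ), hP1]
end

section
/- Outer shift property of the multidimensional Gaussian inverse set: Fix a d×d positive semidefinite real matrix V and ε ∈ (0,1). Then there exist constants D₂ > 0 and δ₂ > 0 such that for all 0 ≤ δ < δ₂: Q_inv(V, ε+δ) + D₂·δ·1 ⊆ Q_inv(V,ε); equivalently, for every z ∈ ℝ^d with P[Z ≤ z] ≥ 1−ε−δ one has P[Z ≤ z + D₂·δ·1] ≥ 1−ε, where 1 := (1,…,1) ∈ ℝ^d. -/
/-!
The law `μ` of `Z = A W` is the image of the standard Gaussian measure under a linear map, so it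
satisfies the Prékopa–Leindler inequality: on `ℝ` this follows from the one-dimensional
Brunn–Minkowski inequality applied to level sets, it passes to the Gaussian through its
log-concave density, and it tensorizes. Hence `F z = μ (Iic z)` is log-concave,
`F ((1 - θ) b + θ c) ≥ F b ^ (1 - θ) * F c ^ θ`.

Tightness of `μ` gives `T` with `F (z + T) ≥ 1 - ε / 2` whenever `F z ≥ (1 - ε) / 2`. Along the
segment from `z` to `z + T`, log-concavity then makes `log F` grow at rate at least
`log ((1 - ε / 2) / (1 - ε)) / T` as long as `F < 1 - ε`, so a shift by `O(δ)` lifts `F` from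
`1 - ε - δ` to `1 - ε`.
-/

open MeasureTheory Set Pointwise
open scoped ENNReal NNReal

/-- `P[Z ≤ z]` for the centered Gaussian vector `Z = A·W` in `ℝ^d`, where `W` is a vector of
`d` independent standard Gaussians (so `Z` has covariance `A·Aᵀ`). -/
noncomputable def stdGaussianCdf {d : ℕ} (A : Matrix (Fin d) (Fin d) ℝ) (z : Fin d → ℝ) : ℝ :=
  ((MeasureTheory.Measure.map (fun w => A.mulVec w)
      (MeasureTheory.Measure.pi fun _ : Fin d => ProbabilityTheory.gaussianReal 0 1))
    {y | ∀ i, y i ≤ z i}).toReal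

theorem Real.volume_image_mul_add {c : ℝ} (hc : 0 < c) (r : ℝ) (s : Set ℝ) :
    volume ((fun x => c * x + r) '' s) = ENNReal.ofReal c * volume s := by
  have : (fun x => c * x + r) '' s = (fun x => x + r) '' (c • s) := by
    rw [← Set.image_smul, Set.image_image]; rfl
  rw [this, Set.image_add_right, measure_preimage_add_right,
    Measure.addHaar_smul_of_nonneg _ hc.le, Module.finrank_self, pow_one]

theorem Real.volume_add_le_of_isCompact {θ : ℝ} (h0 : 0 < θ) (h1 : θ < 1) {K L C : Set ℝ}
    (hK : IsCompact K) (hL : IsCompact L) (hKne : K.Nonempty) (hLne : L.Nonempty)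
    (hC : ∀ x ∈ K, ∀ y ∈ L, (1 - θ) * x + θ * y ∈ C) :
    ENNReal.ofReal (1 - θ) * volume K + ENNReal.ofReal θ * volume L ≤ volume C := by
  -- `(1 - θ) K + θ b` and `θ L + (1 - θ) a` lie in `C`, on either side of `m`
  set a := sSup K
  set b := sInf L
  set m := (1 - θ) * a + θ * b
  set X := (fun x => (1 - θ) * x + θ * b) '' K
  set Y := (fun y => θ * y + (1 - θ) * a) '' L
  have hXm : X ⊆ Iic m := by
    rintro _ ⟨x, hx, rfl⟩
    have := le_csSup hK.bddAbove hx
    simp only [mem_Iic, m]; nlinarith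
  have hYm : Y ⊆ Ici m := by
    rintro _ ⟨y, hy, rfl⟩
    have := csInf_le hL.bddBelow hy
    simp only [mem_Ici, m]; nlinarith
  have hXY : X ∪ Y ⊆ C := by
    rintro _ (⟨x, hx, rfl⟩ | ⟨y, hy, rfl⟩)
    · exact hC x hx b (hL.sInf_mem hLne)
    · simpa only [add_comm] using hC a (hK.sSup_mem hKne) y hy
  have hdisj : AEDisjoint volume X Y :=
    measure_mono_null (fun z hz => (le_antisymm (hXm hz.1) (hYm hz.2) : z = m))
      (measure_singleton m)
  calc ENNReal.ofReal (1 - θ) * volume K + ENNReal.ofReal θ * volume L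
      = volume X + volume Y := by
        rw [Real.volume_image_mul_add (by linarith), Real.volume_image_mul_add h0]
    _ = volume (X ∪ Y) :=
        (measure_union₀ (hL.image (by fun_prop)).measurableSet.nullMeasurableSet hdisj).symm
    _ ≤ volume C := measure_mono hXY

theorem Real.volume_add_le_of_measurableSet {θ : ℝ} (h0 : 0 < θ) (h1 : θ < 1) {A B C : Set ℝ}
    (hA : MeasurableSet A) (hB : MeasurableSet B) (hAne : A.Nonempty) (hBne : B.Nonempty)
    (hC : ∀ x ∈ A, ∀ y ∈ B, (1 - θ) * x + θ * y ∈ C) :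
    ENNReal.ofReal (1 - θ) * volume A + ENNReal.ofReal θ * volume B ≤ volume C := by
  have hreg : ∀ {S : Set ℝ}, MeasurableSet S →
      volume S = ⨆ K : {K // K ⊆ S ∧ IsCompact K}, volume (K : Set ℝ) := fun hS => by
    simp only [hS.measure_eq_iSup_isCompact, iSup_subtype, iSup_and]
  obtain ⟨a, ha⟩ := hAne
  obtain ⟨b, hb⟩ := hBne
  have : ∀ S : Set ℝ, Nonempty {K // K ⊆ S ∧ IsCompact K} :=
    fun S => ⟨⟨∅, empty_subset S, isCompact_empty⟩⟩
  rw [hreg hA, hreg hB, ENNReal.mul_iSup, ENNReal.mul_iSup]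
  refine ENNReal.iSup_add_iSup_le fun K L => ?_
  have hK : K.1 ∪ {a} ⊆ A := union_subset K.2.1 (singleton_subset_iff.2 ha)
  have hL : L.1 ∪ {b} ⊆ B := union_subset L.2.1 (singleton_subset_iff.2 hb)
  calc ENNReal.ofReal (1 - θ) * volume K.1 + ENNReal.ofReal θ * volume L.1
      ≤ ENNReal.ofReal (1 - θ) * volume (K.1 ∪ {a}) + ENNReal.ofReal θ * volume (L.1 ∪ {b}) := by
        gcongr <;> exact subset_union_left
    _ ≤ volume C := Real.volume_add_le_of_isCompact h0 h1 (K.2.2.union isCompact_singleton)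
        (L.2.2.union isCompact_singleton) ⟨a, by simp⟩ ⟨b, by simp⟩
        fun x hx y hy => hC x (hK hx) y (hL hy)

theorem lintegral_eq_setLIntegral_measure_lt {α : Type*} [MeasurableSpace α] (μ : Measure α)
    {u : α → ℝ≥0∞} (hu : Measurable u) (hu1 : ∀ x, u x ≤ 1) :
    ∫⁻ x, u x ∂μ = ∫⁻ t in Ioo 0 1, μ {x | ENNReal.ofReal t < u x} := by
  have hne : ∀ x, u x ≠ ∞ := fun x => ne_top_of_le_ne_top ENNReal.one_ne_top (hu1 x)
  have hempty : ∀ t ∈ Ici (1 : ℝ), μ {x | t < (u x).toReal} = 0 := fun t ht => by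
    convert measure_empty (μ := μ)
    refine eq_empty_of_forall_notMem fun x hx => ?_
    have := ENNReal.toReal_mono ENNReal.one_ne_top (hu1 x)
    simp only [mem_ofPred_eq, ENNReal.toReal_one] at hx this
    exact (ht.trans_lt hx).not_ge this
  calc ∫⁻ x, u x ∂μ = ∫⁻ x, ENNReal.ofReal (u x).toReal ∂μ := by
        simp only [ENNReal.ofReal_toReal (hne _)]
    _ = ∫⁻ t in Ioi 0, μ {x | t < (u x).toReal} :=
        lintegral_eq_lintegral_meas_lt μ (ae_of_all _ fun _ => ENNReal.toReal_nonneg)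
          hu.ennreal_toReal.aemeasurable
    _ = ∫⁻ t in Ioo 0 1, μ {x | t < (u x).toReal} := by
        rw [← Ioo_union_Ici_eq_Ioi zero_lt_one,
          lintegral_union measurableSet_Ici ((Iio_disjoint_Ici le_rfl).mono_left Ioo_subset_Iio_self),
          setLIntegral_congr_fun measurableSet_Ici hempty, lintegral_zero, add_zero]
    _ = ∫⁻ t in Ioo 0 1, μ {x | ENNReal.ofReal t < u x} :=
        setLIntegral_congr_fun measurableSet_Ioo fun t ht => by
          simp only [ENNReal.ofReal_lt_iff_lt_toReal ht.1.le (hne _)]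

theorem setLIntegral_measure_lt_le_lintegral {α : Type*} [MeasurableSpace α] (μ : Measure α)
    {u : α → ℝ≥0∞} (hu : Measurable u) :
    ∫⁻ t in Ioo 0 1, μ {x | ENNReal.ofReal t < u x} ≤ ∫⁻ x, u x ∂μ := by
  calc ∫⁻ t in Ioo 0 1, μ {x | ENNReal.ofReal t < u x}
      = ∫⁻ t in Ioo 0 1, μ {x | ENNReal.ofReal t < min (u x) 1} :=
        setLIntegral_congr_fun measurableSet_Ioo fun t ht => by
          simp only [lt_min_iff, ENNReal.ofReal_lt_one.2 ht.2, and_true]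
    _ = ∫⁻ x, min (u x) 1 ∂μ :=
        (lintegral_eq_setLIntegral_measure_lt μ (hu.min measurable_const)
          fun _ => min_le_right _ _).symm
    _ ≤ ∫⁻ x, u x ∂μ := lintegral_mono fun _ => min_le_left _ _

theorem ENNReal.rpow_mul_rpow_le_add {θ : ℝ} (h0 : 0 < θ) (h1 : θ < 1) (a b : ℝ≥0∞) :
    a ^ (1 - θ) * b ^ θ ≤ ENNReal.ofReal (1 - θ) * a + ENNReal.ofReal θ * b := by
  rcases eq_or_ne a ∞ with rfl | ha
  · rw [ENNReal.mul_top (ENNReal.ofReal_pos.2 (sub_pos.2 h1)).ne', top_add]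
    exact le_top
  rcases eq_or_ne b ∞ with rfl | hb
  · rw [ENNReal.mul_top (ENNReal.ofReal_pos.2 h0).ne', add_top]
    exact le_top
  lift a to ℝ≥0 using ha
  lift b to ℝ≥0 using hb
  have key := NNReal.geom_mean_le_arith_mean2_weighted ⟨1 - θ, by linarith⟩ ⟨θ, h0.le⟩ a b
    (NNReal.eq (sub_add_cancel 1 θ))
  rw [ENNReal.ofReal_eq_coe_nnreal (by linarith), ENNReal.ofReal_eq_coe_nnreal h0.le,
    ← ENNReal.coe_rpow_of_nonneg _ (by linarith), ← ENNReal.coe_rpow_of_nonneg _ h0.le]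
  exact_mod_cast key

theorem ENNReal.min_le_rpow_mul_rpow {θ : ℝ} (h0 : 0 ≤ θ) (h1 : θ ≤ 1) (a b : ℝ≥0∞) :
    min a b ≤ a ^ (1 - θ) * b ^ θ := by
  calc min a b = min a b ^ (1 - θ) * min a b ^ θ := by
        rw [← ENNReal.rpow_add_of_nonneg _ _ (by linarith) h0, sub_add_cancel, ENNReal.rpow_one]
    _ ≤ a ^ (1 - θ) * b ^ θ :=
        mul_le_mul' (ENNReal.rpow_le_rpow (min_le_left _ _) (by linarith))
          (ENNReal.rpow_le_rpow (min_le_right _ _) h0)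

/-- The Prékopa–Leindler inequality for `μ`, asked only of `[0,1]`-valued `f` and `g`: by
homogeneity this loses nothing, and it keeps the marginals bounded when tensorizing. -/
def SatisfiesPrekopaLeindler {E : Type*} [MeasurableSpace E] [AddCommMonoid E] [Module ℝ E]
    (μ : Measure E) : Prop :=
  ∀ ⦃θ : ℝ⦄, 0 < θ → θ < 1 → ∀ ⦃f g h : E → ℝ≥0∞⦄, Measurable f → Measurable g → Measurable h →
    (∀ x, f x ≤ 1) → (∀ y, g y ≤ 1) →
    (∀ x y, f x ^ (1 - θ) * g y ^ θ ≤ h ((1 - θ) • x + θ • y)) →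
    (∫⁻ x, f x ∂μ) ^ (1 - θ) * (∫⁻ y, g y ∂μ) ^ θ ≤ ∫⁻ z, h z ∂μ

theorem Real.add_lintegral_le_of_min_le {θ : ℝ} (h0 : 0 < θ) (h1 : θ < 1) {f g h : ℝ → ℝ≥0∞}
    (hf : Measurable f) (hg : Measurable g) (hh : Measurable h)
    (hf1 : ⨆ x, f x = 1) (hg1 : ⨆ y, g y = 1)
    (hfgh : ∀ x y, min (f x) (g y) ≤ h ((1 - θ) * x + θ * y)) :
    ENNReal.ofReal (1 - θ) * (∫⁻ x, f x) + ENNReal.ofReal θ * ∫⁻ y, g y ≤ ∫⁻ z, h z := by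
  have hlevel : ∀ (u : ℝ → ℝ≥0∞), ⨆ x, u x = 1 → ∀ t ∈ Ioo (0 : ℝ) 1,
      {x | ENNReal.ofReal t < u x}.Nonempty := fun u hu t ht =>
    lt_iSup_iff.1 (hu ▸ ENNReal.ofReal_lt_one.2 ht.2 : ENNReal.ofReal t < ⨆ x, u x)
  have hf' : ∀ x, f x ≤ 1 := fun x => hf1 ▸ le_iSup f x
  have hg' : ∀ y, g y ≤ 1 := fun y => hg1 ▸ le_iSup g y
  rw [lintegral_eq_setLIntegral_measure_lt (volume : Measure ℝ) hf hf',
    lintegral_eq_setLIntegral_measure_lt (volume : Measure ℝ) hg hg',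
    ← lintegral_const_mul' _ _ ENNReal.ofReal_ne_top,
    ← lintegral_const_mul' _ _ ENNReal.ofReal_ne_top]
  refine (le_lintegral_add _ _).trans
    ((setLIntegral_mono' measurableSet_Ioo fun t ht => ?_).trans
      (setLIntegral_measure_lt_le_lintegral (volume : Measure ℝ) hh))
  exact Real.volume_add_le_of_measurableSet h0 h1 (measurableSet_lt measurable_const hf)
    (measurableSet_lt measurable_const hg) (hlevel f hf1 t ht) (hlevel g hg1 t ht)
    fun x hx y hy => (lt_min hx hy).trans_le (hfgh x y)

theorem Real.lintegral_rpow_mul_lintegral_rpow_le_of_iSup_eq_one {θ : ℝ} (h0 : 0 < θ)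
    (h1 : θ < 1) {f g h : ℝ → ℝ≥0∞} (hf : Measurable f) (hg : Measurable g) (hh : Measurable h)
    (hf1 : ⨆ x, f x = 1) (hg1 : ⨆ y, g y = 1)
    (hfgh : ∀ x y, f x ^ (1 - θ) * g y ^ θ ≤ h ((1 - θ) * x + θ * y)) :
    (∫⁻ x, f x) ^ (1 - θ) * (∫⁻ y, g y) ^ θ ≤ ∫⁻ z, h z :=
  (ENNReal.rpow_mul_rpow_le_add h0 h1 _ _).trans <|
    Real.add_lintegral_le_of_min_le h0 h1 hf hg hh hf1 hg1 fun x y =>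
      (ENNReal.min_le_rpow_mul_rpow h0.le h1.le _ _).trans (hfgh x y)

theorem Real.satisfiesPrekopaLeindler_volume : SatisfiesPrekopaLeindler (volume : Measure ℝ) := by
  intro θ h0 h1 f g h hf hg hh hf1 hg1 hfgh
  have hθ : 0 < 1 - θ := sub_pos.2 h1
  set a := ⨆ x, f x
  set b := ⨆ y, g y
  rcases eq_or_ne a 0 with ha0 | ha0
  · have hf0 : ∫⁻ x, f x = 0 := by simp [ENNReal.iSup_eq_zero.1 ha0]
    simp [hf0, ENNReal.zero_rpow_of_pos hθ]
  rcases eq_or_ne b 0 with hb0 | hb0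
  · have hg0 : ∫⁻ y, g y = 0 := by simp [ENNReal.iSup_eq_zero.1 hb0]
    simp [hg0, ENNReal.zero_rpow_of_pos h0]
  have ha : a ≠ ∞ := ne_top_of_le_ne_top ENNReal.one_ne_top (iSup_le hf1)
  have hb : b ≠ ∞ := ne_top_of_le_ne_top ENNReal.one_ne_top (iSup_le hg1)
  -- normalize `f` and `g` to have supremum `1`, and `h` accordingly
  set c := a⁻¹ ^ (1 - θ) * b⁻¹ ^ θ
  have hc : c ≠ ∞ := ENNReal.mul_ne_top (ENNReal.rpow_ne_top_of_nonneg hθ.le (by simpa))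
    (ENNReal.rpow_ne_top_of_nonneg h0.le (by simpa))
  have hc1 : c * (a ^ (1 - θ) * b ^ θ) = 1 := by
    calc c * (a ^ (1 - θ) * b ^ θ) = (a⁻¹ * a) ^ (1 - θ) * (b⁻¹ * b) ^ θ := by
          rw [ENNReal.mul_rpow_of_nonneg _ _ hθ.le, ENNReal.mul_rpow_of_nonneg _ _ h0.le]; ring
      _ = 1 := by
          rw [ENNReal.inv_mul_cancel ha0 ha, ENNReal.inv_mul_cancel hb0 hb, ENNReal.one_rpow,
            ENNReal.one_rpow, one_mul]
  have hnorm : ∀ {u : ℝ → ℝ≥0∞} {m : ℝ≥0∞}, ⨆ x, u x = m → m ≠ 0 → m ≠ ∞ →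
      ⨆ x, u x * m⁻¹ = 1 := fun hu hm0 hm => by
    rw [← ENNReal.iSup_mul, hu, ENNReal.mul_inv_cancel hm0 hm]
  have key := Real.lintegral_rpow_mul_lintegral_rpow_le_of_iSup_eq_one h0 h1
    (hf.mul_const a⁻¹) (hg.mul_const b⁻¹) (hh.mul_const c) (hnorm rfl ha0 ha) (hnorm rfl hb0 hb)
    fun x y => by
      calc (f x * a⁻¹) ^ (1 - θ) * (g y * b⁻¹) ^ θ = f x ^ (1 - θ) * g y ^ θ * c := by
            rw [ENNReal.mul_rpow_of_nonneg _ _ hθ.le, ENNReal.mul_rpow_of_nonneg _ _ h0.le]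
            ring
        _ ≤ h ((1 - θ) * x + θ * y) * c := by gcongr; exact hfgh x y
  rw [lintegral_mul_const' _ _ (by simpa), lintegral_mul_const' _ _ (by simpa),
    lintegral_mul_const' _ _ hc] at key
  calc (∫⁻ x, f x) ^ (1 - θ) * (∫⁻ y, g y) ^ θ
      = (∫⁻ x, f x) ^ (1 - θ) * (∫⁻ y, g y) ^ θ * (c * (a ^ (1 - θ) * b ^ θ)) := by
        rw [hc1, mul_one]
    _ = ((∫⁻ x, f x) * a⁻¹) ^ (1 - θ) * ((∫⁻ y, g y) * b⁻¹) ^ θ * (a ^ (1 - θ) * b ^ θ) := by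
        rw [ENNReal.mul_rpow_of_nonneg _ _ hθ.le, ENNReal.mul_rpow_of_nonneg _ _ h0.le]
        ring
    _ ≤ (∫⁻ z, h z) * c * (a ^ (1 - θ) * b ^ θ) := by gcongr
    _ = ∫⁻ z, h z := by rw [mul_assoc, hc1, mul_one]

namespace SatisfiesPrekopaLeindler

variable {E F : Type*} [MeasurableSpace E] [AddCommMonoid E] [Module ℝ E]
  [MeasurableSpace F] [AddCommMonoid F] [Module ℝ F]

theorem withDensity {μ : Measure E} (hμ : SatisfiesPrekopaLeindler μ) {ρ : E → ℝ≥0∞}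
    (hρ : Measurable ρ) (hρ1 : ∀ x, ρ x ≤ 1)
    (hρθ : ∀ θ : ℝ, 0 < θ → θ < 1 → ∀ x y, ρ x ^ (1 - θ) * ρ y ^ θ ≤ ρ ((1 - θ) • x + θ • y)) :
    SatisfiesPrekopaLeindler (μ.withDensity ρ) := by
  intro θ h0 h1 f g h hf hg hh hf1 hg1 hfgh
  simp only [lintegral_withDensity_eq_lintegral_mul μ hρ hf,
    lintegral_withDensity_eq_lintegral_mul μ hρ hg, lintegral_withDensity_eq_lintegral_mul μ hρ hh]
  refine hμ h0 h1 (hρ.mul hf) (hρ.mul hg) (hρ.mul hh) (fun x => mul_le_one' (hρ1 x) (hf1 x))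
    (fun y => mul_le_one' (hρ1 y) (hg1 y)) fun x y => ?_
  calc (ρ x * f x) ^ (1 - θ) * (ρ y * g y) ^ θ
      = (ρ x ^ (1 - θ) * ρ y ^ θ) * (f x ^ (1 - θ) * g y ^ θ) := by
        rw [ENNReal.mul_rpow_of_nonneg _ _ (sub_pos.2 h1).le,
          ENNReal.mul_rpow_of_nonneg _ _ h0.le]
        ring
    _ ≤ ρ ((1 - θ) • x + θ • y) * h ((1 - θ) • x + θ • y) :=
        mul_le_mul' (hρθ θ h0 h1 x y) (hfgh x y)

theorem prod {μ : Measure E} {ν : Measure F} [IsProbabilityMeasure ν]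
    (hμ : SatisfiesPrekopaLeindler μ) (hν : SatisfiesPrekopaLeindler ν) :
    SatisfiesPrekopaLeindler (μ.prod ν) := by
  intro θ h0 h1 f g h hf hg hh hf1 hg1 hfgh
  rw [lintegral_prod _ hf.aemeasurable, lintegral_prod _ hg.aemeasurable,
    lintegral_prod _ hh.aemeasurable]
  have hmarginal : ∀ {u : E × F → ℝ≥0∞}, (∀ p, u p ≤ 1) → ∀ x, ∫⁻ v, u (x, v) ∂ν ≤ 1 :=
    fun hu x => (lintegral_mono fun v => hu (x, v)).trans_eq (by simp)
  exact hμ h0 h1 hf.lintegral_prod_right' hg.lintegral_prod_right' hh.lintegral_prod_right'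
    (hmarginal hf1) (hmarginal hg1) fun x y =>
      hν h0 h1 (hf.comp measurable_prodMk_left) (hg.comp measurable_prodMk_left)
        (hh.comp measurable_prodMk_left) (fun v => hf1 _) (fun w => hg1 _)
        fun v w => hfgh (x, v) (y, w)

theorem map {μ : Measure E} (hμ : SatisfiesPrekopaLeindler μ) (L : E →ₗ[ℝ] F)
    (hL : Measurable L) : SatisfiesPrekopaLeindler (μ.map L) := by
  intro θ h0 h1 f g h hf hg hh hf1 hg1 hfgh
  rw [lintegral_map hf hL, lintegral_map hg hL, lintegral_map hh hL]
  exact hμ h0 h1 (hf.comp hL) (hg.comp hL) (hh.comp hL) (fun x => hf1 _) (fun y => hg1 _)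
    fun x y => by simpa only [Function.comp_apply, map_add, map_smul] using hfgh (L x) (L y)

end SatisfiesPrekopaLeindler

theorem satisfiesPrekopaLeindler_dirac {E : Type*} [MeasurableSpace E] [AddCommMonoid E]
    [Module ℝ E] (x : E) : SatisfiesPrekopaLeindler (Measure.dirac x) := by
  intro θ h0 h1 f g h hf hg hh hf1 hg1 hfgh
  rw [lintegral_dirac' x hf, lintegral_dirac' x hg, lintegral_dirac' x hh]
  simpa only [Convex.combo_self (sub_add_cancel 1 θ)] using hfgh x x

namespace ProbabilityTheory

theorem gaussianPDFReal_rpow_mul_rpow_le (m : ℝ) (v : ℝ≥0) {θ : ℝ} (h0 : 0 ≤ θ) (h1 : θ ≤ 1)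
    (x y : ℝ) :
    gaussianPDFReal m v x ^ (1 - θ) * gaussianPDFReal m v y ^ θ
      ≤ gaussianPDFReal m v ((1 - θ) * x + θ * y) := by
  have hc : 0 ≤ (√(2 * Real.pi * v))⁻¹ := by positivity
  -- the gap is `θ (1 - θ) (x - y) ^ 2`
  have hquad : ((1 - θ) * x + θ * y - m) ^ 2 ≤ (1 - θ) * (x - m) ^ 2 + θ * (y - m) ^ 2 := by
    nlinarith [mul_nonneg (mul_nonneg h0 (sub_nonneg.2 h1)) (sq_nonneg (x - y))]
  simp only [gaussianPDFReal, Real.mul_rpow hc (Real.exp_pos _).le, ← Real.exp_mul]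
  calc (√(2 * Real.pi * v))⁻¹ ^ (1 - θ) * Real.exp (-(x - m) ^ 2 / (2 * v) * (1 - θ))
        * ((√(2 * Real.pi * v))⁻¹ ^ θ * Real.exp (-(y - m) ^ 2 / (2 * v) * θ))
      = (√(2 * Real.pi * v))⁻¹ ^ (1 - θ + θ)
          * Real.exp (-(x - m) ^ 2 / (2 * v) * (1 - θ) + -(y - m) ^ 2 / (2 * v) * θ) := by
        rw [Real.rpow_add' hc (by norm_num), mul_mul_mul_comm, ← Real.exp_add]
    _ ≤ (√(2 * Real.pi * v))⁻¹ * Real.exp (-((1 - θ) * x + θ * y - m) ^ 2 / (2 * v)) := by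
        rw [sub_add_cancel, Real.rpow_one, show -(x - m) ^ 2 / (2 * v) * (1 - θ)
          + -(y - m) ^ 2 / (2 * v) * θ = -((1 - θ) * (x - m) ^ 2 + θ * (y - m) ^ 2) / (2 * v) by
            ring]
        gcongr

theorem gaussianPDF_rpow_mul_rpow_le (m : ℝ) (v : ℝ≥0) {θ : ℝ} (h0 : 0 ≤ θ) (h1 : θ ≤ 1)
    (x y : ℝ) :
    gaussianPDF m v x ^ (1 - θ) * gaussianPDF m v y ^ θ
      ≤ gaussianPDF m v ((1 - θ) * x + θ * y) := by
  simp only [gaussianPDF, ENNReal.ofReal_rpow_of_nonneg (gaussianPDFReal_nonneg _ _ _) h0,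
    ENNReal.ofReal_rpow_of_nonneg (gaussianPDFReal_nonneg _ _ _) (sub_nonneg.2 h1),
    ← ENNReal.ofReal_mul (Real.rpow_nonneg (gaussianPDFReal_nonneg _ _ _) _)]
  exact ENNReal.ofReal_le_ofReal (gaussianPDFReal_rpow_mul_rpow_le m v h0 h1 x y)

theorem gaussianPDF_zero_one_le_one (x : ℝ) : gaussianPDF 0 1 x ≤ 1 := by
  refine ENNReal.ofReal_le_one.2 (mul_le_one₀ ?_ (Real.exp_pos _).le ?_)
  · refine inv_le_one_of_one_le₀ (Real.one_le_sqrt.2 ?_)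
    norm_num
    nlinarith [Real.pi_gt_three]
  · refine Real.exp_le_one_iff.2 ?_
    simp only [sub_zero, NNReal.coe_one, mul_one]
    linarith [sq_nonneg x]

theorem satisfiesPrekopaLeindler_gaussianReal : SatisfiesPrekopaLeindler (gaussianReal 0 1) := by
  rw [gaussianReal_of_var_ne_zero 0 one_ne_zero]
  exact Real.satisfiesPrekopaLeindler_volume.withDensity (measurable_gaussianPDF 0 1)
    gaussianPDF_zero_one_le_one fun θ h0 h1 x y =>
      gaussianPDF_rpow_mul_rpow_le 0 1 h0.le h1.le x y

theorem satisfiesPrekopaLeindler_pi_gaussianReal (n : ℕ) :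
    SatisfiesPrekopaLeindler (Measure.pi fun _ : Fin n => gaussianReal 0 1) := by
  induction n with
  | zero =>
    rw [Measure.pi_of_empty]
    exact satisfiesPrekopaLeindler_dirac _
  | succ n ih =>
    have hcons : ⇑(MeasurableEquiv.piFinSuccAbove (fun _ : Fin (n + 1) => ℝ) 0).symm
        = Fin.consEquivL ℝ (fun _ : Fin (n + 1) => ℝ) := by
      funext p
      simp [MeasurableEquiv.piFinSuccAbove, Fin.consEquivL, Fin.consLinearEquiv, Fin.consEquiv]
    rw [← (measurePreserving_piFinSuccAbove (fun _ => gaussianReal 0 1) 0).symm.map_eq, hcons]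
    exact (satisfiesPrekopaLeindler_gaussianReal.prod ih).map
      (Fin.consEquivL ℝ (fun _ : Fin (n + 1) => ℝ)).toLinearMap
      (Fin.consEquivL ℝ _).continuous.measurable

end ProbabilityTheory

namespace SatisfiesPrekopaLeindler

theorem measure_rpow_mul_rpow_le {E : Type*} [MeasurableSpace E] [AddCommMonoid E] [Module ℝ E]
    {μ : Measure E} (hμ : SatisfiesPrekopaLeindler μ) {θ : ℝ} (h0 : 0 < θ) (h1 : θ < 1)
    {K L M : Set E} (hK : MeasurableSet K) (hL : MeasurableSet L) (hM : MeasurableSet M)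
    (hKLM : ∀ x ∈ K, ∀ y ∈ L, (1 - θ) • x + θ • y ∈ M) :
    μ K ^ (1 - θ) * μ L ^ θ ≤ μ M := by
  have hind : ∀ (S : Set E) x, S.indicator 1 x ≤ (1 : ℝ≥0∞) := fun S x => by
    by_cases hx : x ∈ S <;> simp [hx]
  have key := hμ h0 h1 (measurable_one.indicator hK) (measurable_one.indicator hL)
    (measurable_one.indicator hM) (hind K) (hind L) fun x y => by
      by_cases hx : x ∈ K
      · by_cases hy : y ∈ L
        · simp [hx, hy, hKLM x hx y hy]
        · simp [hy, ENNReal.zero_rpow_of_pos h0]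
      · simp [hx, ENNReal.zero_rpow_of_pos (sub_pos.2 h1)]
  rwa [lintegral_indicator_one hK, lintegral_indicator_one hL, lintegral_indicator_one hM] at key

theorem measureReal_Iic_rpow_mul_rpow_le {ι : Type*} [Fintype ι] {μ : Measure (ι → ℝ)}
    [IsFiniteMeasure μ] (hμ : SatisfiesPrekopaLeindler μ) {θ : ℝ} (h0 : 0 < θ) (h1 : θ < 1)
    (b c : ι → ℝ) :
    μ.real (Iic b) ^ (1 - θ) * μ.real (Iic c) ^ θ ≤ μ.real (Iic ((1 - θ) • b + θ • c)) := by
  have key := hμ.measure_rpow_mul_rpow_le h0 h1 (measurableSet_Iic (a := b))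
    (measurableSet_Iic (a := c)) measurableSet_Iic fun x hx y hy => mem_Iic.2 <| add_le_add
      (smul_le_smul_of_nonneg_left hx (sub_pos.2 h1).le) (smul_le_smul_of_nonneg_left hy h0.le)
  simpa only [measureReal_def, ENNReal.toReal_mul, ENNReal.toReal_rpow] using
    ENNReal.toReal_mono (measure_ne_top _ _) key

end SatisfiesPrekopaLeindler

theorem Real.mul_one_add_mul_log_div_le_rpow_mul_rpow {p q : ℝ} (hp : 0 < p) (hq : 0 < q)
    (θ : ℝ) : p * (1 + θ * Real.log (q / p)) ≤ p ^ (1 - θ) * q ^ θ := by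
  calc p * (1 + θ * Real.log (q / p)) ≤ p * Real.exp (θ * Real.log (q / p)) := by
        gcongr; linarith [Real.add_one_le_exp (θ * Real.log (q / p))]
    _ = p ^ (1 - θ) * q ^ θ := by
        rw [Real.rpow_sub hp, Real.rpow_one, Real.rpow_def_of_pos hp, Real.rpow_def_of_pos hq,
          Real.log_div hq.ne' hp.ne', mul_sub, Real.exp_sub]
        field_simp

theorem Real.le_rpow_mul_rpow_of_log_div_le {a b p q δ θ : ℝ} (ha : 0 < a) (hδ0 : 0 ≤ δ)
    (hδa : 2 * δ ≤ a) (hp : a - δ ≤ p) (hpa : p ≤ a) (hab : a ≤ b) (hbq : b ≤ q) (hθ0 : 0 ≤ θ)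
    (hθ : 2 * δ / a ≤ θ * Real.log (b / a)) :
    a ≤ p ^ (1 - θ) * q ^ θ := by
  have hp0 : 0 < p := by linarith
  have hlog : Real.log (b / a) ≤ Real.log (q / p) :=
    Real.log_le_log (div_pos (by linarith) ha) (div_le_div₀ (by linarith) hbq hp0 hpa)
  calc a ≤ (a - δ) * (1 + 2 * δ / a) := by
        have : (a - δ) * (1 + 2 * δ / a) - a = δ * (a - 2 * δ) / a := by field_simp; ring
        nlinarith [div_nonneg (mul_nonneg hδ0 (sub_nonneg.2 hδa)) ha.le]
    _ ≤ p * (1 + θ * Real.log (q / p)) :=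
        mul_le_mul hp (add_le_add_right (hθ.trans (mul_le_mul_of_nonneg_left hlog hθ0)) 1)
          (by positivity) hp0.le
    _ ≤ p ^ (1 - θ) * q ^ θ := Real.mul_one_add_mul_log_div_le_rpow_mul_rpow hp0 (by linarith) θ

theorem exists_measureReal_Iic_add_ge {ι : Type*} [Fintype ι] (μ : Measure (ι → ℝ))
    [IsProbabilityMeasure μ] {p q : ℝ} (hp : 0 < p) (hq : q < 1) :
    ∃ T > 0, ∀ z, p ≤ μ.real (Iic z) → q ≤ μ.real (Iic (z + fun _ => T)) := by
  set box : ℝ → Set (ι → ℝ) := fun r => Icc (fun _ => -r) (fun _ => r)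
  have hbox : Filter.Tendsto (fun r => μ.real (box r)) Filter.atTop (nhds 1) := by
    have hmono : Monotone box := fun r s hrs =>
      Icc_subset_Icc (fun _ => neg_le_neg hrs) fun _ => hrs
    have hunion : ⋃ r, box r = univ := eq_univ_of_forall fun y => by
      obtain ⟨r, hr⟩ := (Set.finite_range fun i => |y i|).bddAbove
      exact mem_iUnion.2 ⟨r, fun i => (abs_le.1 (hr ⟨i, rfl⟩)).1,
        fun i => (abs_le.1 (hr ⟨i, rfl⟩)).2⟩
    have := tendsto_measure_iUnion_atTop (μ := μ) hmono
    rw [hunion, measure_univ] at this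
    exact (ENNReal.tendsto_toReal ENNReal.one_ne_top).comp this
  obtain ⟨r, hrq, hrp, hr⟩ := ((hbox.eventually (lt_mem_nhds hq)).and
    ((hbox.eventually (lt_mem_nhds (sub_lt_self 1 hp))).and (Filter.eventually_gt_atTop 0))).exists
  refine ⟨2 * r, by positivity, fun z hz => hrq.le.trans (measureReal_mono fun w hw i => ?_)⟩
  -- the box meets `Iic z`, so `z ≥ -r` and `Iic (z + 2r)` contains the box
  obtain ⟨y, hyz, hy⟩ := nonempty_inter_of_measureReal_lt_add (μ := μ) (s := Iic z)
    measurableSet_Icc (subset_univ _) (subset_univ (box r)) (by rw [probReal_univ]; linarith)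
  have := hyz i
  have := hy.1 i
  have := hw.2 i
  simp only [Pi.add_apply]
  linarith

theorem SatisfiesPrekopaLeindler.exists_shift {ι : Type*} [Fintype ι] {μ : Measure (ι → ℝ)}
    [IsProbabilityMeasure μ] (hμ : SatisfiesPrekopaLeindler μ) {ε : ℝ} (hε0 : 0 < ε)
    (hε1 : ε < 1) :
    ∃ D : ℝ, 0 < D ∧ ∃ δ₂ : ℝ, 0 < δ₂ ∧ ∀ δ : ℝ, 0 ≤ δ → δ < δ₂ →
      ∀ z : ι → ℝ, 1 - ε - δ ≤ μ.real (Iic z) → 1 - ε ≤ μ.real (Iic fun i => z i + D * δ) := by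
  have hε : 0 < 1 - ε := sub_pos.2 hε1
  obtain ⟨T, hT, hshift⟩ := exists_measureReal_Iic_add_ge μ (p := (1 - ε) / 2) (q := 1 - ε / 2)
    (by positivity) (by linarith)
  set c := Real.log ((1 - ε / 2) / (1 - ε))
  have hc : 0 < c := Real.log_pos ((one_lt_div hε).2 (by linarith))
  refine ⟨2 * T / ((1 - ε) * c), by positivity, min ((1 - ε) / 2) ((1 - ε) * c / 2),
    by positivity, fun δ hδ0 hδ z hz => ?_⟩
  obtain ⟨hδε, hδc⟩ := lt_min_iff.1 hδ
  rcases le_or_gt (1 - ε) (μ.real (Iic z)) with hp | hp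
  · exact hp.trans (measureReal_mono (Iic_subset_Iic.2 fun i => by
      simp only [le_add_iff_nonneg_right]; positivity))
  set θ := 2 * δ / ((1 - ε) * c)
  have hθ0 : 0 < θ := div_pos (by linarith) (by positivity)
  have hθ1 : θ < 1 := (div_lt_one (by positivity)).2 (by linarith)
  have hcomb : (fun i => z i + 2 * T / ((1 - ε) * c) * δ)
      = (1 - θ) • z + θ • (z + fun _ => T) := by
    funext i
    simp only [Pi.add_apply, Pi.smul_apply, smul_eq_mul, θ]
    field_simp
    ring
  rw [hcomb]
  refine le_trans ?_ (hμ.measureReal_Iic_rpow_mul_rpow_le hθ0 hθ1 z _)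
  exact Real.le_rpow_mul_rpow_of_log_div_le hε hδ0 (by linarith) hz hp.le (by linarith)
    (hshift z (by linarith)) hθ0.le
    (le_of_eq (by rw [div_mul_eq_mul_div, mul_div_mul_right _ _ hc.ne']))

theorem Qinv_outer_shift_general {d : ℕ} (A : Matrix (Fin d) (Fin d) ℝ)
    (ε : ℝ) (hε : ε ∈ Set.Ioo (0 : ℝ) 1) :
    ∃ D₂ : ℝ, 0 < D₂ ∧ ∃ δ₂ : ℝ, 0 < δ₂ ∧
      ∀ δ : ℝ, 0 ≤ δ → δ < δ₂ →
        ∀ z : Fin d → ℝ, 1 - ε - δ ≤ stdGaussianCdf A z →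
          1 - ε ≤ stdGaussianCdf A (fun i => z i + D₂ * δ) := by
  have hA : Measurable A.mulVecLin := A.mulVecLin.continuous_of_finiteDimensional.measurable
  have : IsProbabilityMeasure
      ((Measure.pi fun _ : Fin d => ProbabilityTheory.gaussianReal 0 1).map A.mulVecLin) :=
    Measure.isProbabilityMeasure_map hA.aemeasurable
  exact ((ProbabilityTheory.satisfiesPrekopaLeindler_pi_gaussianReal d).map A.mulVecLin
    hA).exists_shift hε.1 hε.2

/-- **Outer shift property of the multidimensional Gaussian inverse set.**
For a `d×d` positive semidefinite `V = A·Aᵀ` and `ε ∈ (0,1)` there are `D₂ > 0` and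
`δ₂ > 0` such that for all `0 ≤ δ < δ₂` and every `z` with `P[Z ≤ z] ≥ 1−ε−δ`,
`P[Z ≤ z + D₂·δ·1] ≥ 1−ε`. -/
theorem Qinv_outer_shift {d : ℕ} (V A : Matrix (Fin d) (Fin d) ℝ)
    (hV : V.PosSemidef) (hA : A * A.transpose = V)
    (ε : ℝ) (hε : ε ∈ Set.Ioo (0 : ℝ) 1) :
    ∃ D₂ : ℝ, 0 < D₂ ∧ ∃ δ₂ : ℝ, 0 < δ₂ ∧
      ∀ δ : ℝ, 0 ≤ δ → δ < δ₂ →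
        ∀ z : Fin d → ℝ, 1 - ε - δ ≤ stdGaussianCdf A z →
          1 - ε ≤ stdGaussianCdf A (fun i => z i + D₂ * δ) :=
  Qinv_outer_shift_general A ε hε
end

section
/- MASC RCU bound: Let (X₁,X₂) be a pair of random variables with joint distribution P_{X₁X₂} on countable alphabets 𝒳₁ × 𝒳₂, and let M₁, M₂ be positive integers. Then there exists an (M₁,M₂,ε) MASC with ε ≤ E[ min{ 1, A₁ + A₂ + A₁₂ } ], where A₁ := (1/M₁)·|{ x̄₁ ∈ 𝒳₁ : P_{X₁|X₂}(x̄₁|X₂) ≥ P_{X₁|X₂}(X₁|X₂) }|, A₂ := (1/M₂)·|{ x̄₂ ∈ 𝒳₂ : P_{X₂|X₁}(x̄₂|X₁) ≥ P_{X₂|X₁}(X₂|X₁) }|, and A₁₂ := (1/(M₁·M₂))·|{ (x̄₁,x̄₂) ∈ 𝒳₁×𝒳₂ : P_{X₁X₂}(x̄₁,x̄₂) ≥ P_{X₁X₂}(X₁,X₂) }|. -/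
/-!
Random binning: draw the bin indices `f₁ a`, `f₂ b` independently and uniformly and decode a bin
to its most likely element. A source pair `x` can only be decoded wrongly if some `y ≠ x` with
`P x ≤ P y` lands in the same bin; a union bound over such `y` gives probability at most
`A₁ + A₂ + A₁₂`, since `y` agrees with `x` in the first coordinate (collision probability
`1 / M₂`), in the second (`1 / M₁`), or in neither (`1 / (M₁ M₂)`). Averaging the error over
the binning, some binning does at least as well as the average.
-/

open MeasureTheory ProbabilityTheory
open scoped ENNReal

lemma Summable.finite_setOf_const_le {α : Type*} {P : α → ℝ} (hP : Summable P) {c : ℝ}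
    (hc : 0 < c) : {y | c ≤ P y}.Finite := by
  refine (Filter.mem_cofinite.1 (hP.tendsto_cofinite_zero (Iio_mem_nhds hc))).subset fun y hy => ?_
  simpa using hy

lemma Summable.exists_isMaxOn {α : Type*} {P : α → ℝ} (hP : Summable P) {s : Set α} {x : α}
    (hxs : x ∈ s) (hx : 0 < P x) : ∃ y ∈ s, IsMaxOn P s y := by
  obtain ⟨y, ⟨hys, hxy⟩, hmax⟩ := Set.exists_max_image {y | y ∈ s ∧ P x ≤ P y} P
    ((hP.finite_setOf_const_le hx).subset fun y hy => hy.2) ⟨x, hxs, le_rfl⟩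
  refine ⟨y, hys, fun z hzs => ?_⟩
  rcases le_total (P x) (P z) with hxz | hzx
  · exact hmax z ⟨hzs, hxz⟩
  · exact hzx.trans hxy

lemma measure_biUnion_le_encard_mul {Ω ι : Type*} [MeasurableSpace Ω] [Countable ι]
    (μ : Measure Ω) {s : Set ι} {E : ι → Set Ω} {c : ℝ≥0∞} (h : ∀ i ∈ s, μ (E i) ≤ c) :
    μ (⋃ i ∈ s, E i) ≤ s.encard * c :=
  calc μ (⋃ i ∈ s, E i) ≤ ∑' i : s, μ (E i) := measure_biUnion_le μ s.to_countable E
    _ ≤ ∑' _ : s, c := ENNReal.tsum_le_tsum fun i => h i i.2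
    _ = s.encard * c := ENNReal.tsum_set_const s c

lemma exists_tsum_indicator_le_tsum_mul_measure {Ω ι : Type*} [MeasurableSpace Ω] [Countable ι]
    (μ : Measure Ω) [IsProbabilityMeasure μ] {A : ι → Set Ω} (hA : ∀ i, MeasurableSet (A i))
    (w : ι → ℝ≥0∞) : ∃ ω, ∑' i, (A i).indicator (fun _ => w i) ω ≤ ∑' i, w i * μ (A i) := by
  have hmeas (i : ι) : Measurable ((A i).indicator fun _ => w i) :=
    measurable_const.indicator (hA i)
  have hsum : Measurable fun ω => ∑' i, (A i).indicator (fun _ => w i) ω := .tsum hmeas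
  obtain ⟨ω, hω⟩ := exists_le_lintegral (μ := μ) hsum.aemeasurable
  refine ⟨ω, hω.trans_eq ?_⟩
  rw [lintegral_tsum fun i => (hmeas i).aemeasurable]
  exact tsum_congr fun i => lintegral_indicator_const (hA i) (w i)

section Decoding

variable {α γ : Type*}

def IsConfusable (P : α → ℝ) (b : α → γ) (x : α) : Prop :=
  ∃ y ≠ x, b y = b x ∧ P x ≤ P y

lemma exists_decoder_eq_of_not_isConfusable [Nonempty α] {P : α → ℝ} (hP : Summable P)
    (b : α → γ) :
    ∃ g : γ → α, ∀ x, 0 < P x → ¬ IsConfusable P b x → g (b x) = x := by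
  have hbin (m : γ) :
      ∃ y, ∀ x, b x = m → 0 < P x → y ∈ b ⁻¹' {m} ∧ IsMaxOn P (b ⁻¹' {m}) y := by
    by_cases h : ∃ x, b x = m ∧ 0 < P x
    · obtain ⟨x, hxm, hx⟩ := h
      obtain ⟨y, hy, hmax⟩ := hP.exists_isMaxOn (s := b ⁻¹' {m}) hxm hx
      exact ⟨y, fun _ _ _ => ⟨hy, hmax⟩⟩
    · push Not at h
      exact ⟨Classical.arbitrary α, fun x hxm hx => absurd hx (not_lt.2 (h x hxm))⟩
  choose g hg using hbin
  refine ⟨g, fun x hx hconf => by_contra fun hne => hconf ?_⟩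
  obtain ⟨hbin, hmax⟩ := hg (b x) x rfl hx
  exact ⟨g (b x), hne, hbin, hmax (Set.mem_preimage.2 rfl)⟩

lemma exists_decoder_tsum_error_le [Nonempty α] [DecidableEq α] {P : α → ℝ}
    (hP0 : ∀ x, 0 ≤ P x) (hP : Summable P) (b : α → γ) :
    ∃ g : γ → α,
      ∑' x, (if g (b x) = x then 0 else P x) ≤ ∑' x, {x | IsConfusable P b x}.indicator P x := by
  obtain ⟨g, hg⟩ := exists_decoder_eq_of_not_isConfusable hP b
  have herr_nonneg (x : α) : 0 ≤ if g (b x) = x then 0 else P x := by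
    split_ifs <;> simp [hP0 x]
  have herr_le (x : α) : (if g (b x) = x then 0 else P x) ≤ P x := by
    split_ifs <;> simp [hP0 x]
  refine ⟨g, Summable.tsum_le_tsum (fun x => ?_) (hP.of_nonneg_of_le herr_nonneg herr_le)
    (hP.indicator _)⟩
  by_cases hconf : IsConfusable P b x
  · rw [Set.indicator_of_mem (s := {x | IsConfusable P b x}) hconf]
    exact herr_le x
  · rw [Set.indicator_of_notMem (s := {x | IsConfusable P b x}) hconf]
    rcases (hP0 x).eq_or_lt with hx | hx
    · simp [← hx]
    · simp [hg x hx hconf]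

end Decoding

section UniformBinning

variable (ι β : Type*) [MeasurableSpace β]

noncomputable def uniformBinning : Measure (ι → β) :=
  Measure.infinitePi fun _ => uniformOn Set.univ

instance [Finite β] [Nonempty β] : IsProbabilityMeasure (uniformBinning ι β) := by
  unfold uniformBinning
  infer_instance

variable {ι β}

lemma uniformBinning_setOf_eq [Fintype β] [Nonempty β] [MeasurableSingletonClass β]
    [DecidableEq ι] (a b : ι) :
    uniformBinning ι β {f | f a = f b} = if a = b then 1 else (Fintype.card β : ℝ≥0∞)⁻¹ := by
  split_ifs with hab
  · simp [hab]
  have hunion : {f : ι → β | f a = f b} = ⋃ k : β, Set.pi ↑({a, b} : Finset ι) fun _ => {k} := by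
    ext f
    simp [eq_comm]
  have hsingleton (k : β) : uniformOn (Set.univ : Set β) {k} = (Fintype.card β : ℝ≥0∞)⁻¹ := by
    simp [uniformOn_univ]
  rw [uniformBinning, hunion, measure_iUnion, tsum_fintype]
  · simp only [Measure.infinitePi_pi _ (fun _ _ => measurableSet_singleton _), hsingleton,
      Finset.prod_pair hab, Finset.sum_const, Finset.card_univ, nsmul_eq_mul]
    rw [← mul_assoc, ENNReal.mul_inv_cancel (by simp) (by simp), one_mul]
  · intro k l hkl
    refine Set.disjoint_left.2 fun f hk hl => hkl ?_
    simp_all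
  · exact fun k => .pi (Set.toFinite _).countable fun _ _ => measurableSet_singleton _

end UniformBinning

section RandomBinning

variable {𝒳₁ 𝒳₂ : Type*} (β₁ β₂ : Type*) [MeasurableSpace β₁] [MeasurableSpace β₂]

noncomputable def randomBinning : Measure ((𝒳₁ → β₁) × (𝒳₂ → β₂)) :=
  (uniformBinning 𝒳₁ β₁).prod (uniformBinning 𝒳₂ β₂)

instance [Finite β₁] [Nonempty β₁] [Finite β₂] [Nonempty β₂] :
    IsProbabilityMeasure (randomBinning (𝒳₁ := 𝒳₁) (𝒳₂ := 𝒳₂) β₁ β₂) := by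
  unfold randomBinning
  infer_instance

variable {β₁ β₂}

lemma measurableSet_isConfusable [MeasurableEq β₁] [MeasurableEq β₂]
    [Countable 𝒳₁] [Countable 𝒳₂] (P : 𝒳₁ × 𝒳₂ → ℝ) (x : 𝒳₁ × 𝒳₂) :
    MeasurableSet {f : (𝒳₁ → β₁) × (𝒳₂ → β₂) | IsConfusable P (Prod.map f.1 f.2) x} := by
  have h : {f : (𝒳₁ → β₁) × (𝒳₂ → β₂) | IsConfusable P (Prod.map f.1 f.2) x}
      = ⋃ y ∈ {y | y ≠ x ∧ P x ≤ P y},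
          {f : 𝒳₁ → β₁ | f y.1 = f x.1} ×ˢ {f : 𝒳₂ → β₂ | f y.2 = f x.2} := by
    ext f
    simp only [IsConfusable, Set.mem_ofPred_eq, Set.mem_iUnion, Set.mem_prod, Prod.ext_iff,
      Prod.map_fst, Prod.map_snd, exists_prop]
    grind
  rw [h]
  exact .biUnion (Set.to_countable _) fun y _ =>
    (measurableSet_eq_fun (measurable_pi_apply y.1) (measurable_pi_apply x.1)).prod
      (measurableSet_eq_fun (measurable_pi_apply y.2) (measurable_pi_apply x.2))

variable [Fintype β₁] [Nonempty β₁] [MeasurableSingletonClass β₁]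
  [Fintype β₂] [Nonempty β₂] [MeasurableSingletonClass β₂]

lemma randomBinning_setOf_same_bin [DecidableEq 𝒳₁] [DecidableEq 𝒳₂] (x y : 𝒳₁ × 𝒳₂) :
    randomBinning β₁ β₂ {f | f.1 y.1 = f.1 x.1 ∧ f.2 y.2 = f.2 x.2}
      = (if y.1 = x.1 then 1 else (Fintype.card β₁ : ℝ≥0∞)⁻¹)
        * (if y.2 = x.2 then 1 else (Fintype.card β₂ : ℝ≥0∞)⁻¹) := by
  rw [← uniformBinning_setOf_eq, ← uniformBinning_setOf_eq, randomBinning, ← Measure.prod_prod]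
  rfl

lemma randomBinning_isConfusable_le [Countable 𝒳₁] [Countable 𝒳₂] (P : 𝒳₁ × 𝒳₂ → ℝ)
    (x : 𝒳₁ × 𝒳₂) :
    randomBinning β₁ β₂ {f | IsConfusable P (Prod.map f.1 f.2) x}
      ≤ {a | P x ≤ P (a, x.2)}.encard * (Fintype.card β₁ : ℝ≥0∞)⁻¹
        + {b | P x ≤ P (x.1, b)}.encard * (Fintype.card β₂ : ℝ≥0∞)⁻¹
        + {y | P x ≤ P y}.encard * ((Fintype.card β₁ : ℝ≥0∞)⁻¹ * (Fintype.card β₂ : ℝ≥0∞)⁻¹) := by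
  classical
  set E : 𝒳₁ × 𝒳₂ → Set ((𝒳₁ → β₁) × (𝒳₂ → β₂)) :=
    fun y => {f | f.1 y.1 = f.1 x.1 ∧ f.2 y.2 = f.2 x.2}
  have hsub : {f : (𝒳₁ → β₁) × (𝒳₂ → β₂) | IsConfusable P (Prod.map f.1 f.2) x}
      ⊆ (⋃ a ∈ {a | a ≠ x.1 ∧ P x ≤ P (a, x.2)}, E (a, x.2))
        ∪ (⋃ b ∈ {b | b ≠ x.2 ∧ P x ≤ P (x.1, b)}, E (x.1, b))
        ∪ ⋃ y ∈ {y : 𝒳₁ × 𝒳₂ | y.1 ≠ x.1 ∧ y.2 ≠ x.2 ∧ P x ≤ P y}, E y := by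
    rintro f ⟨⟨y₁, y₂⟩, hyx, hbin, hle⟩
    have hE : f ∈ E (y₁, y₂) := Prod.ext_iff.1 hbin
    rcases eq_or_ne y₁ x.1 with rfl | h₁ <;> rcases eq_or_ne y₂ x.2 with rfl | h₂
    · exact absurd rfl hyx
    · exact Or.inl (Or.inr (Set.mem_biUnion ⟨h₂, hle⟩ hE))
    · exact Or.inl (Or.inl (Set.mem_biUnion ⟨h₁, hle⟩ hE))
    · exact Or.inr (Set.mem_biUnion ⟨h₁, h₂, hle⟩ hE)
  have h₁ : randomBinning β₁ β₂ (⋃ a ∈ {a | a ≠ x.1 ∧ P x ≤ P (a, x.2)}, E (a, x.2))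
      ≤ {a | a ≠ x.1 ∧ P x ≤ P (a, x.2)}.encard * (Fintype.card β₁ : ℝ≥0∞)⁻¹ :=
    measure_biUnion_le_encard_mul _ fun a ha =>
      (randomBinning_setOf_same_bin x (a, x.2)).trans_le (by simp [ha.1])
  have h₂ : randomBinning β₁ β₂ (⋃ b ∈ {b | b ≠ x.2 ∧ P x ≤ P (x.1, b)}, E (x.1, b))
      ≤ {b | b ≠ x.2 ∧ P x ≤ P (x.1, b)}.encard * (Fintype.card β₂ : ℝ≥0∞)⁻¹ :=
    measure_biUnion_le_encard_mul _ fun b hb =>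
      (randomBinning_setOf_same_bin x (x.1, b)).trans_le (by simp [hb.1])
  have h₁₂ : randomBinning β₁ β₂ (⋃ y ∈ {y : 𝒳₁ × 𝒳₂ | y.1 ≠ x.1 ∧ y.2 ≠ x.2 ∧ P x ≤ P y}, E y)
      ≤ {y : 𝒳₁ × 𝒳₂ | y.1 ≠ x.1 ∧ y.2 ≠ x.2 ∧ P x ≤ P y}.encard
        * ((Fintype.card β₁ : ℝ≥0∞)⁻¹ * (Fintype.card β₂ : ℝ≥0∞)⁻¹) :=
    measure_biUnion_le_encard_mul _ fun y hy =>
      (randomBinning_setOf_same_bin x y).trans_le (by simp [hy.1, hy.2.1])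
  refine (measure_mono hsub).trans <| (measure_union_le _ _).trans <|
    (add_le_add_left (measure_union_le _ _) _).trans <|
    (add_le_add (add_le_add h₁ h₂) h₁₂).trans ?_
  gcongr
  · exact And.right
  · exact And.right
  · exact fun hy => hy.2.2

/-- The integrand `min {1, A₁ + A₂ + A₁₂}`, with the paper's comparisons of conditional
probabilities replaced by the equivalent (when `0 < P x`) comparisons of joint probabilities. -/
noncomputable def rcuWeight (P : 𝒳₁ × 𝒳₂ → ℝ) (M₁ M₂ : ℕ) (x : 𝒳₁ × 𝒳₂) : ℝ :=
  min 1 (1 / (M₁ : ℝ) * {a | P x ≤ P (a, x.2)}.ncard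
    + 1 / (M₂ : ℝ) * {b | P x ≤ P (x.1, b)}.ncard
    + 1 / ((M₁ : ℝ) * (M₂ : ℝ)) * {y | P x ≤ P y}.ncard)

lemma randomBinning_isConfusable_le_rcuWeight [Countable 𝒳₁] [Countable 𝒳₂]
    {P : 𝒳₁ × 𝒳₂ → ℝ} (hP : Summable P) {x : 𝒳₁ × 𝒳₂} (hx : 0 < P x) :
    randomBinning β₁ β₂ {f | IsConfusable P (Prod.map f.1 f.2) x}
      ≤ ENNReal.ofReal (rcuWeight P (Fintype.card β₁) (Fintype.card β₂) x) := by
  have hfin := hP.finite_setOf_const_le hx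
  have hfin₁ : {a | P x ≤ P (a, x.2)}.Finite :=
    hfin.preimage (f := fun a => (a, x.2)) (Prod.mk_left_injective x.2).injOn
  have hfin₂ : {b | P x ≤ P (x.1, b)}.Finite :=
    hfin.preimage (f := (x.1, ·)) (Prod.mk_right_injective x.1).injOn
  have hM₁ : (0 : ℝ) < Fintype.card β₁ := by exact_mod_cast Fintype.card_pos
  have hM₂ : (0 : ℝ) < Fintype.card β₂ := by exact_mod_cast Fintype.card_pos
  rw [rcuWeight, ENNReal.ofReal_min, ENNReal.ofReal_one]
  refine le_min prob_le_one ((randomBinning_isConfusable_le P x).trans_eq ?_)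
  rw [← hfin.cast_ncard_eq, ← hfin₁.cast_ncard_eq, ← hfin₂.cast_ncard_eq,
    ENNReal.ofReal_add (by positivity) (by positivity),
    ENNReal.ofReal_add (by positivity) (by positivity),
    ENNReal.ofReal_mul (by positivity), ENNReal.ofReal_mul (by positivity),
    ENNReal.ofReal_mul (by positivity), one_div, one_div, one_div, mul_inv,
    ENNReal.ofReal_mul (by positivity), ENNReal.ofReal_inv_of_pos hM₁,
    ENNReal.ofReal_inv_of_pos hM₂]
  simp [mul_comm]

theorem exists_binning_tsum_indicator_isConfusable_le [Countable 𝒳₁] [Countable 𝒳₂]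
    {P : 𝒳₁ × 𝒳₂ → ℝ} (hP0 : ∀ x, 0 ≤ P x) (hP : Summable P) :
    ∃ f : (𝒳₁ → β₁) × (𝒳₂ → β₂),
      ∑' x, {x | IsConfusable P (Prod.map f.1 f.2) x}.indicator P x
        ≤ ∑' x, P x * rcuWeight P (Fintype.card β₁) (Fintype.card β₂) x := by
  obtain ⟨f, hf⟩ := exists_tsum_indicator_le_tsum_mul_measure (randomBinning β₁ β₂)
    (measurableSet_isConfusable P) (fun x => ENNReal.ofReal (P x))
  refine ⟨f, ?_⟩
  have hw (x : 𝒳₁ × 𝒳₂) : 0 ≤ P x * rcuWeight P (Fintype.card β₁) (Fintype.card β₂) x :=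
    mul_nonneg (hP0 x) (le_min zero_le_one (by positivity))
  have hw_le (x : 𝒳₁ × 𝒳₂) : P x * rcuWeight P (Fintype.card β₁) (Fintype.card β₂) x ≤ P x :=
    mul_le_of_le_one_right (hP0 x) (min_le_left _ _)
  rw [← ENNReal.ofReal_le_ofReal_iff (tsum_nonneg hw),
    ENNReal.ofReal_tsum_of_nonneg (Set.indicator_nonneg fun x _ => hP0 x) (hP.indicator _),
    ENNReal.ofReal_tsum_of_nonneg hw (hP.of_nonneg_of_le hw hw_le)]
  calc ∑' x, ENNReal.ofReal ({x | IsConfusable P (Prod.map f.1 f.2) x}.indicator P x)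
      = ∑' x, {f : (𝒳₁ → β₁) × (𝒳₂ → β₂) | IsConfusable P (Prod.map f.1 f.2) x}.indicator
          (fun _ => ENNReal.ofReal (P x)) f := by
        refine tsum_congr fun x => ?_
        by_cases h : IsConfusable P (Prod.map f.1 f.2) x <;> simp [Set.indicator, h]
    _ ≤ _ := hf
    _ ≤ _ := ENNReal.tsum_le_tsum fun x => ?_
  rcases (hP0 x).eq_or_lt with hx | hx
  · simp [← hx]
  · rw [ENNReal.ofReal_mul (hP0 x)]
    gcongr
    exact randomBinning_isConfusable_le_rcuWeight hP hx

end RandomBinning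

/-- **MASC RCU bound.**
For a pair `(X₁,X₂)` with joint distribution `P` on countable alphabets and positive
integers `M₁, M₂`, there exists an `(M₁,M₂,ε)` MASC whose error probability is at most
`E[min{1, A₁ + A₂ + A₁₂}]`, where, writing `P_{X₁|X₂}(a|b) = P(a,b)/P₂(b)` etc.,
`A₁ = (1/M₁)·|{x̄₁ : P_{X₁|X₂}(x̄₁|X₂) ≥ P_{X₁|X₂}(X₁|X₂)}|`,
`A₂ = (1/M₂)·|{x̄₂ : P_{X₂|X₁}(x̄₂|X₁) ≥ P_{X₂|X₁}(X₂|X₁)}|`, and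
`A₁₂ = (1/(M₁M₂))·|{(x̄₁,x̄₂) : P(x̄₁,x̄₂) ≥ P(X₁,X₂)}|`. -/
theorem masc_rcu_bound {𝒳₁ 𝒳₂ : Type*} [Countable 𝒳₁] [Countable 𝒳₂]
    [DecidableEq 𝒳₁] [DecidableEq 𝒳₂]
    (P : 𝒳₁ × 𝒳₂ → ℝ) (hP0 : ∀ x, 0 ≤ P x) (hPsum : ∑' x, P x = 1)
    (P1 : 𝒳₁ → ℝ) (hP1 : ∀ a, P1 a = ∑' b, P (a, b))
    (P2 : 𝒳₂ → ℝ) (hP2 : ∀ b, P2 b = ∑' a, P (a, b))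
    (M₁ M₂ : ℕ) (hM₁ : 0 < M₁) (hM₂ : 0 < M₂) :
    ∃ f₁ : 𝒳₁ → Fin M₁, ∃ f₂ : 𝒳₂ → Fin M₂,
      ∃ g : Fin M₁ × Fin M₂ → 𝒳₁ × 𝒳₂,
        (∑' x : 𝒳₁ × 𝒳₂, if g (f₁ x.1, f₂ x.2) = x then (0 : ℝ) else P x)
          ≤ ∑' x : 𝒳₁ × 𝒳₂, P x *
              min 1
                ((1 / (M₁ : ℝ)) *
                    ({a : 𝒳₁ | P x / P2 x.2 ≤ P (a, x.2) / P2 x.2}.ncard : ℝ)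
                  + (1 / (M₂ : ℝ)) *
                    ({b : 𝒳₂ | P x / P1 x.1 ≤ P (x.1, b) / P1 x.1}.ncard : ℝ)
                  + (1 / ((M₁ : ℝ) * (M₂ : ℝ))) *
                    ({y : 𝒳₁ × 𝒳₂ | P x ≤ P y}.ncard : ℝ)) := by
  have hP : Summable P := by
    by_contra h
    simp [tsum_eq_zero_of_not_summable h] at hPsum
  have : Nonempty (𝒳₁ × 𝒳₂) := by
    by_contra h
    rw [not_nonempty_iff] at h
    simp at hPsum
  have : NeZero M₁ := ⟨hM₁.ne'⟩
  have : NeZero M₂ := ⟨hM₂.ne'⟩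
  obtain ⟨f, hf⟩ := exists_binning_tsum_indicator_isConfusable_le (β₁ := Fin M₁) (β₂ := Fin M₂)
    hP0 hP
  obtain ⟨g, hg⟩ := exists_decoder_tsum_error_le hP0 hP (Prod.map f.1 f.2)
  refine ⟨f.1, f.2, g, hg.trans (hf.trans_eq (tsum_congr fun x => ?_))⟩
  rcases (hP0 x).eq_or_lt with hx | hx
  · simp [← hx]
  have hP1x : 0 < P1 x.1 := hP1 x.1 ▸
    (hP.comp_injective (Prod.mk_right_injective x.1)).tsum_pos (fun b => hP0 _) x.2 hx
  have hP2x : 0 < P2 x.2 := hP2 x.2 ▸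
    (hP.comp_injective (Prod.mk_left_injective x.2)).tsum_pos (fun a => hP0 _) x.1 hx
  simp only [Fintype.card_fin, rcuWeight, div_le_div_iff_of_pos_right hP1x,
    div_le_div_iff_of_pos_right hP2x]
end

section
/- Composite hypothesis testing (meta-)converse for the MASC: Let (f₁,f₂,g) be an (M₁,M₂,ε) MASC for (X₁,X₂) with joint distribution P_{X₁X₂} on countable alphabets 𝒳₁ × 𝒳₂, and let Q⁽¹⁾, Q⁽²⁾, Q⁽³⁾ be measures on 𝒳₁×𝒳₂, each assigning finite mass to every singleton. Then (β₁*, β₂*, β₃*) ∈ β_{1−ε}(P_{X₁X₂}, {Q⁽¹⁾, Q⁽²⁾, Q⁽³⁾}), where β₁* := M₁ · Σ_{x₂∈𝒳₂} sup_{x̂₁∈𝒳₁} Q⁽¹⁾(x̂₁,x₂), β₂* := M₂ · Σ_{x₁∈𝒳₁} sup_{x̂₂∈𝒳₂} Q⁽²⁾(x₁,x̂₂), and β₃* := M₁·M₂ · sup_{(x̂₁,x̂₂)∈𝒳₁×𝒳₂} Q⁽³⁾(x̂₁,x̂₂); in particular, the deterministic test t(x₁,x₂) := 1{ g(f₁(x₁),f₂(x₂))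 = (x₁,x₂) } witnesses this membership. -/
/-!
The error-free event `S = {x | g (f₁ x₁, f₂ x₂) = x}` has probability at least `1 - ε`, since its
complement carries the error probability. On `S` the decoder `g` recovers `x` from
`(f₁ x₁, x₂)`, from `(x₁, f₂ x₂)` and from `(f₁ x₁, f₂ x₂)`, so these three maps are injective
on `S`. Bounding `Q⁽ʲ⁾(x)` by the supremum over the coordinates that the map forgets and
summing over the images (`M₁` copies of `𝒳₂`, `M₂` copies of `𝒳₁`, `M₁ M₂` points) gives the
three bounds.
-/

open scoped ENNReal
open Set

theorem Summable.tsum_ite_add_tsum_ite_not {α β : Type*} [UniformSpace α] [AddCommGroup α]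
    [IsUniformAddGroup α] [CompleteSpace α] [T2Space α] {f : β → α} (hf : Summable f)
    (p : β → Prop) [DecidablePred p] :
    (∑' x, if p x then f x else 0) + (∑' x, if p x then 0 else f x) = ∑' x, f x := by
  have hin : Summable fun x => if p x then f x else 0 :=
    (hf.indicator {x | p x}).congr fun x => by simp [indicator_apply]
  have hout : Summable fun x => if p x then 0 else f x :=
    (hf.indicator {x | p x}ᶜ).congr fun x => by simp [indicator_apply]
  rw [← hin.tsum_add hout]
  exact tsum_congr fun x => by split_ifs <;> simp

namespace ENNReal

theorem tsum_ite_le_tsum_of_injOn {α β : Type*} (p : α → Prop) [DecidablePred p]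
    {Q : α → ℝ≥0∞} {G : β → ℝ≥0∞} {φ : α → β} (hφ : InjOn φ {x | p x})
    (hQ : ∀ x, p x → Q x ≤ G (φ x)) :
    (∑' x, if p x then Q x else 0) ≤ ∑' y, G y :=
  calc (∑' x, if p x then Q x else 0) = ∑' x : {x | p x}, Q x := by
        rw [tsum_subtype]
        exact tsum_congr fun x => by simp [indicator]
    _ ≤ ∑' x : {x | p x}, G (φ x) := ENNReal.tsum_le_tsum fun x => hQ x x.2
    _ ≤ ∑' y, G y := tsum_comp_le_tsum_of_injective hφ.injective G

theorem tsum_prod_snd {α β : Type*} (F : β → ℝ≥0∞) :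
    ∑' c : α × β, F c.2 = ENat.card α * ∑' b, F b := by
  simp only [ENNReal.tsum_prod', ENNReal.tsum_const]

theorem tsum_prod_fst {α β : Type*} (F : α → ℝ≥0∞) :
    ∑' c : α × β, F c.1 = ENat.card β * ∑' a, F a := by
  simp only [ENNReal.tsum_prod', ENNReal.tsum_const, ENNReal.tsum_mul_right, mul_comm]

end ENNReal

theorem masc_ht_converse_general {𝒳₁ 𝒳₂ : Type*}
    [DecidableEq 𝒳₁] [DecidableEq 𝒳₂]
    (P : 𝒳₁ × 𝒳₂ → ℝ) (hPsum : ∑' x, P x = 1)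
    (M₁ M₂ : ℕ) (ε : ℝ)
    (f₁ : 𝒳₁ → Fin M₁) (f₂ : 𝒳₂ → Fin M₂) (g : Fin M₁ × Fin M₂ → 𝒳₁ × 𝒳₂)
    (hcode : (∑' x : 𝒳₁ × 𝒳₂, if g (f₁ x.1, f₂ x.2) = x then (0 : ℝ) else P x) ≤ ε)
    (Q1 Q2 Q3 : 𝒳₁ × 𝒳₂ → ℝ≥0∞) :
    (1 - ε ≤ ∑' x : 𝒳₁ × 𝒳₂, if g (f₁ x.1, f₂ x.2) = x then P x else 0) ∧
    ((∑' x : 𝒳₁ × 𝒳₂, if g (f₁ x.1, f₂ x.2) = x then Q1 x else 0)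
        ≤ (M₁ : ℝ≥0∞) * ∑' x₂ : 𝒳₂, ⨆ x₁ : 𝒳₁, Q1 (x₁, x₂)) ∧
    ((∑' x : 𝒳₁ × 𝒳₂, if g (f₁ x.1, f₂ x.2) = x then Q2 x else 0)
        ≤ (M₂ : ℝ≥0∞) * ∑' x₁ : 𝒳₁, ⨆ x₂ : 𝒳₂, Q2 (x₁, x₂)) ∧
    ((∑' x : 𝒳₁ × 𝒳₂, if g (f₁ x.1, f₂ x.2) = x then Q3 x else 0)
        ≤ (M₁ : ℝ≥0∞) * (M₂ : ℝ≥0∞) * ⨆ y : 𝒳₁ × 𝒳₂, Q3 y) := by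
  have hP : Summable P := by
    by_contra h
    simp [tsum_eq_zero_of_not_summable h] at hPsum
  set decoded : 𝒳₁ × 𝒳₂ → Prop := fun x => g (f₁ x.1, f₂ x.2) = x
  have hsplit := hP.tsum_ite_add_tsum_ite_not decoded
  refine ⟨by linarith, ?_, ?_, ?_⟩
  · calc _ ≤ ∑' c : Fin M₁ × 𝒳₂, ⨆ x₁, Q1 (x₁, c.2) :=
          ENNReal.tsum_ite_le_tsum_of_injOn decoded (φ := fun x => (f₁ x.1, x.2))
            (LeftInvOn.injOn (f₁' := fun c => g (c.1, f₂ c.2)) fun _ hx => hx)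
            fun x _ => le_iSup (fun x₁ => Q1 (x₁, x.2)) x.1
      _ = _ := (ENNReal.tsum_prod_snd fun x₂ => ⨆ x₁, Q1 (x₁, x₂)).trans (by simp)
  · calc _ ≤ ∑' c : 𝒳₁ × Fin M₂, ⨆ x₂, Q2 (c.1, x₂) :=
          ENNReal.tsum_ite_le_tsum_of_injOn decoded (φ := fun x => (x.1, f₂ x.2))
            (LeftInvOn.injOn (f₁' := fun c => g (f₁ c.1, c.2)) fun _ hx => hx)
            fun x _ => le_iSup (fun x₂ => Q2 (x.1, x₂)) x.2
      _ = _ := (ENNReal.tsum_prod_fst fun x₁ => ⨆ x₂, Q2 (x₁, x₂)).trans (by simp)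
  · calc _ ≤ ∑' _ : Fin M₁ × Fin M₂, ⨆ y, Q3 y :=
          ENNReal.tsum_ite_le_tsum_of_injOn decoded (LeftInvOn.injOn (f₁' := g) fun _ hx => hx)
            fun x _ => le_iSup Q3 x
      _ = _ := by simp

/-- **Composite hypothesis testing (meta-)converse for the MASC.**
Given an `(M₁,M₂,ε)` MASC `(f₁,f₂,g)` for `(X₁,X₂) ∼ P` and measures `Q⁽¹⁾,Q⁽²⁾,Q⁽³⁾`
on `𝒳₁ × 𝒳₂` with finite singleton masses, the deterministic test
`t(x₁,x₂) = 1{g(f₁(x₁),f₂(x₂)) = (x₁,x₂)}` witnesses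
`(β₁*,β₂*,β₃*) ∈ β_{1−ε}(P, {Q⁽¹⁾,Q⁽²⁾,Q⁽³⁾})`, where
`β₁* = M₁·Σ_{x₂} sup_{x̂₁} Q⁽¹⁾(x̂₁,x₂)`, `β₂* = M₂·Σ_{x₁} sup_{x̂₂} Q⁽²⁾(x₁,x̂₂)`,
`β₃* = M₁M₂·sup_{x̂₁,x̂₂} Q⁽³⁾(x̂₁,x̂₂)`. -/
theorem masc_ht_converse {𝒳₁ 𝒳₂ : Type*} [Countable 𝒳₁] [Countable 𝒳₂]
    [DecidableEq 𝒳₁] [DecidableEq 𝒳₂]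
    (P : 𝒳₁ × 𝒳₂ → ℝ) (hP0 : ∀ x, 0 ≤ P x) (hPsum : ∑' x, P x = 1)
    (M₁ M₂ : ℕ) (hM₁ : 0 < M₁) (hM₂ : 0 < M₂) (ε : ℝ)
    (f₁ : 𝒳₁ → Fin M₁) (f₂ : 𝒳₂ → Fin M₂) (g : Fin M₁ × Fin M₂ → 𝒳₁ × 𝒳₂)
    (hcode : (∑' x : 𝒳₁ × 𝒳₂, if g (f₁ x.1, f₂ x.2) = x then (0 : ℝ) else P x) ≤ ε)
    (Q1 Q2 Q3 : 𝒳₁ × 𝒳₂ → ℝ≥0∞)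
    (hQ1 : ∀ x, Q1 x ≠ ⊤) (hQ2 : ∀ x, Q2 x ≠ ⊤) (hQ3 : ∀ x, Q3 x ≠ ⊤) :
    (1 - ε ≤ ∑' x : 𝒳₁ × 𝒳₂, if g (f₁ x.1, f₂ x.2) = x then P x else 0) ∧
    ((∑' x : 𝒳₁ × 𝒳₂, if g (f₁ x.1, f₂ x.2) = x then Q1 x else 0)
        ≤ (M₁ : ℝ≥0∞) * ∑' x₂ : 𝒳₂, ⨆ x₁ : 𝒳₁, Q1 (x₁, x₂)) ∧
    ((∑' x : 𝒳₁ × 𝒳₂, if g (f₁ x.1, f₂ x.2) = x then Q2 x else 0)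
        ≤ (M₂ : ℝ≥0∞) * ∑' x₁ : 𝒳₁, ⨆ x₂ : 𝒳₂, Q2 (x₁, x₂)) ∧
    ((∑' x : 𝒳₁ × 𝒳₂, if g (f₁ x.1, f₂ x.2) = x then Q3 x else 0)
        ≤ (M₁ : ℝ≥0∞) * (M₂ : ℝ≥0∞) * ⨆ y : 𝒳₁ × 𝒳₂, Q3 y) :=
  masc_ht_converse_general P hPsum M₁ M₂ ε f₁ f₂ g hcode Q1 Q2 Q3
end

section
/- Non-asymptotic converse for MASCs with a cooperation facilitator: Let (X₁,X₂) have joint distribution P_{X₁X₂} on countable alphabets 𝒳₁ × 𝒳₂. Then every (L, M₁, M₂, ε) CF-MASC for (X₁,X₂) satisfies, for every γ > 0: ε ≥ P[ { ı(X₁|X₂) ≥ log(L·M₁) + γ } ∪ { ı(X₂|X₁) ≥ log(L·M₂) + γ } ∪ { ı(X₁,X₂) ≥ log(M₁·M₂) + γ } ] − 3·exp(−γ). -/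
lemma cf_alg {c p q : ℝ} (hp : 0 < p) (hc : 0 < c) (γ : ℝ)
    (h : Real.log c + γ ≤ Real.log (q / p)) (hq : p ≤ q) :
    p ≤ q * Real.exp (-γ) / c := by
  have hq' : 0 < q / p := div_pos (lt_of_lt_of_le hp hq) hp
  have h1 : c * Real.exp γ ≤ q / p := by
    have h2 := Real.exp_le_exp.mpr h
    rwa [Real.exp_add, Real.exp_log hc, Real.exp_log hq'] at h2
  have h2 : c * Real.exp γ * p ≤ q := (le_div_iff₀ hp).mp h1
  have h4 := mul_le_mul_of_nonneg_right h2 (Real.exp_pos (-γ)).le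
  rw [le_div_iff₀ hc]
  have hE : Real.exp γ * Real.exp (-γ) = 1 := by rw [← Real.exp_add]; simp
  calc p * c = c * Real.exp γ * p * Real.exp (-γ) := by linear_combination (-(c*p)) * hE
    _ ≤ q * Real.exp (-γ) := h4

lemma cf_count {α β : Type*} [Fintype β] (g : α → ℝ)
    (S : Set α) (hsupp : ∀ a, g a ≠ 0 → a ∈ S) (c : ℝ) (hc : 0 ≤ c)
    (hgc : ∀ a, g a ≤ c) (φ : α → β) (hφ : Set.InjOn φ S) :
    ∑' a, g a ≤ (Fintype.card β : ℝ) * c := by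
  classical
  have hS : S.Finite := Set.Finite.of_finite_image (Set.toFinite _) hφ
  have h0 : ∀ a ∉ hS.toFinset, g a = 0 := by
    intro a ha
    by_contra hne
    exact ha (hS.mem_toFinset.mpr (hsupp a hne))
  have hcard : hS.toFinset.card ≤ Fintype.card β := by
    have := Finset.card_le_card_of_injOn φ (fun a _ => Finset.mem_univ (φ a))
      (fun a ha b hb hab => hφ (hS.mem_toFinset.mp ha) (hS.mem_toFinset.mp hb) hab)
    simpa using this
  calc ∑' a, g a = ∑ a ∈ hS.toFinset, g a := tsum_eq_sum h0
    _ ≤ ∑ _a ∈ hS.toFinset, c := Finset.sum_le_sum fun a _ => hgc a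
    _ = (hS.toFinset.card : ℝ) * c := by rw [Finset.sum_const, nsmul_eq_mul]
    _ ≤ (Fintype.card β : ℝ) * c :=
        mul_le_mul_of_nonneg_right (by exact_mod_cast hcard) hc

/-- **Non-asymptotic converse for MASCs with a cooperation facilitator.**
Every `(L,M₁,M₂,ε)` CF-MASC `(Lf, f₁, f₂, g)` for `(X₁,X₂) ∼ P` satisfies, for every
`γ > 0`:
`ε ≥ P[{ı(X₁|X₂) ≥ log(L·M₁)+γ} ∪ {ı(X₂|X₁) ≥ log(L·M₂)+γ} ∪ {ı(X₁,X₂) ≥ log(M₁·M₂)+γ}]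
      − 3·exp(−γ)`. -/
theorem cf_masc_converse {𝒳₁ 𝒳₂ : Type*} [Countable 𝒳₁] [Countable 𝒳₂]
    [DecidableEq 𝒳₁] [DecidableEq 𝒳₂]
    (P : 𝒳₁ × 𝒳₂ → ℝ) (hP0 : ∀ x, 0 ≤ P x) (hPsum : ∑' x, P x = 1)
    (P1 : 𝒳₁ → ℝ) (hP1 : ∀ a, P1 a = ∑' b, P (a, b))
    (P2 : 𝒳₂ → ℝ) (hP2 : ∀ b, P2 b = ∑' a, P (a, b))
    (L M₁ M₂ : ℕ) (hL : 0 < L) (hM₁ : 0 < M₁) (hM₂ : 0 < M₂)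
    (ε : ℝ)
    (Lf : 𝒳₁ × 𝒳₂ → Fin L)
    (f₁ : Fin L × 𝒳₁ → Fin M₁) (f₂ : Fin L × 𝒳₂ → Fin M₂)
    (g : Fin M₁ × Fin M₂ → 𝒳₁ × 𝒳₂)
    (hcode : (∑' x : 𝒳₁ × 𝒳₂,
        if g (f₁ (Lf x, x.1), f₂ (Lf x, x.2)) = x then (0 : ℝ) else P x) ≤ ε) :
    ∀ γ : ℝ, 0 < γ →
      (∑' x : 𝒳₁ × 𝒳₂,
          if (Real.log ((L : ℝ) * (M₁ : ℝ)) + γ ≤ Real.log (P2 x.2 / P x)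
            ∨ Real.log ((L : ℝ) * (M₂ : ℝ)) + γ ≤ Real.log (P1 x.1 / P x)
            ∨ Real.log ((M₁ : ℝ) * (M₂ : ℝ)) + γ ≤ Real.log (1 / P x))
          then P x else 0)
        - 3 * Real.exp (-γ) ≤ ε := by
  intro γ hγ
  -- basic positivity / summability facts
  have hPs : Summable P := by
    by_contra h
    rw [tsum_eq_zero_of_not_summable h] at hPsum
    norm_num at hPsum
  have hrow : ∀ a : 𝒳₁, Summable fun b => P (a, b) := fun a =>
    hPs.comp_injective (fun b b' h => by simpa using congrArg Prod.snd h)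
  have hcol : ∀ b : 𝒳₂, Summable fun a => P (a, b) := fun b =>
    hPs.comp_injective (fun a a' h => by simpa using congrArg Prod.fst h)
  have hP1nn : ∀ a, 0 ≤ P1 a := fun a => (hP1 a) ▸ tsum_nonneg (fun b => hP0 _)
  have hP2nn : ∀ b, 0 ≤ P2 b := fun b => (hP2 b) ▸ tsum_nonneg (fun a => hP0 _)
  have hPle1 : ∀ x : 𝒳₁ × 𝒳₂, P x ≤ P1 x.1 := by
    intro x
    rw [hP1]
    exact Summable.le_tsum (hrow x.1) x.2 (fun b _ => hP0 _)
  have hPle2 : ∀ x : 𝒳₁ × 𝒳₂, P x ≤ P2 x.2 := by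
    intro x
    rw [hP2]
    exact Summable.le_tsum (hcol x.2) x.1 (fun a _ => hP0 _)
  have hPle : ∀ x, P x ≤ 1 := by
    intro x
    rw [← hPsum]
    exact Summable.le_tsum hPs x (fun y _ => hP0 _)
  -- the four indicator functions
  set E : 𝒳₁ × 𝒳₂ → ℝ :=
    fun x => if g (f₁ (Lf x, x.1), f₂ (Lf x, x.2)) = x then (0 : ℝ) else P x with hE
  set F₁ : 𝒳₁ × 𝒳₂ → ℝ := fun x =>
    if (Real.log ((L : ℝ) * (M₁ : ℝ)) + γ ≤ Real.log (P2 x.2 / P x))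
        ∧ g (f₁ (Lf x, x.1), f₂ (Lf x, x.2)) = x then P x else 0 with hF₁
  set F₂ : 𝒳₁ × 𝒳₂ → ℝ := fun x =>
    if (Real.log ((L : ℝ) * (M₂ : ℝ)) + γ ≤ Real.log (P1 x.1 / P x))
        ∧ g (f₁ (Lf x, x.1), f₂ (Lf x, x.2)) = x then P x else 0 with hF₂
  set F₃ : 𝒳₁ × 𝒳₂ → ℝ := fun x =>
    if (Real.log ((M₁ : ℝ) * (M₂ : ℝ)) + γ ≤ Real.log (1 / P x))
        ∧ g (f₁ (Lf x, x.1), f₂ (Lf x, x.2)) = x then P x else 0 with hF₃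
  have hEnn : ∀ x, 0 ≤ E x := by
    intro x; rw [hE]; dsimp only; split_ifs; exacts [le_rfl, hP0 x]
  have hEle : ∀ x, E x ≤ P x := by
    intro x; rw [hE]; dsimp only; split_ifs; exacts [hP0 x, le_rfl]
  have hF₁nn : ∀ x, 0 ≤ F₁ x := by
    intro x; rw [hF₁]; dsimp only; split_ifs; exacts [hP0 x, le_rfl]
  have hF₁le : ∀ x, F₁ x ≤ P x := by
    intro x; rw [hF₁]; dsimp only; split_ifs; exacts [le_rfl, hP0 x]
  have hF₂nn : ∀ x, 0 ≤ F₂ x := by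
    intro x; rw [hF₂]; dsimp only; split_ifs; exacts [hP0 x, le_rfl]
  have hF₂le : ∀ x, F₂ x ≤ P x := by
    intro x; rw [hF₂]; dsimp only; split_ifs; exacts [le_rfl, hP0 x]
  have hF₃nn : ∀ x, 0 ≤ F₃ x := by
    intro x; rw [hF₃]; dsimp only; split_ifs; exacts [hP0 x, le_rfl]
  have hF₃le : ∀ x, F₃ x ≤ P x := by
    intro x; rw [hF₃]; dsimp only; split_ifs; exacts [le_rfl, hP0 x]
  have hsE : Summable E := hPs.of_nonneg_of_le hEnn hEle
  have hsF₁ : Summable F₁ := hPs.of_nonneg_of_le hF₁nn hF₁le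
  have hsF₂ : Summable F₂ := hPs.of_nonneg_of_le hF₂nn hF₂le
  have hsF₃ : Summable F₃ := hPs.of_nonneg_of_le hF₃nn hF₃le
  -- pointwise decomposition
  have hpt : ∀ x : 𝒳₁ × 𝒳₂,
      (if (Real.log ((L : ℝ) * (M₁ : ℝ)) + γ ≤ Real.log (P2 x.2 / P x)
            ∨ Real.log ((L : ℝ) * (M₂ : ℝ)) + γ ≤ Real.log (P1 x.1 / P x)
            ∨ Real.log ((M₁ : ℝ) * (M₂ : ℝ)) + γ ≤ Real.log (1 / P x))
          then P x else 0) ≤ E x + (F₁ x + (F₂ x + F₃ x)) := by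
    intro x
    rw [hE, hF₁, hF₂, hF₃]
    dsimp only
    split_ifs <;> first | linarith [hP0 x] | tauto
  -- bound on the error-free high-joint-information mass
  have hT3 : ∑' x, F₃ x ≤ Real.exp (-γ) := by
    have hMM : (0 : ℝ) < (M₁ : ℝ) * M₂ := by positivity
    have hc : (0 : ℝ) ≤ Real.exp (-γ) / ((M₁ : ℝ) * M₂) := by positivity
    have key := cf_count F₃ {x : 𝒳₁ × 𝒳₂ | g (f₁ (Lf x, x.1), f₂ (Lf x, x.2)) = x}
      (by
        intro a ha
        rw [hF₃] at ha
        dsimp only at ha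
        by_contra hmem
        exact ha (if_neg (fun hcond => hmem hcond.2)))
      (Real.exp (-γ) / ((M₁ : ℝ) * M₂)) hc
      (by
        intro x
        rw [hF₃]
        dsimp only
        split_ifs with h
        · rcases eq_or_lt_of_le (hP0 x) with h0 | h0
          · exact h0 ▸ hc
          · have := cf_alg h0 hMM γ h.1 (hPle x)
            simpa using this
        · exact hc)
      (fun x => (f₁ (Lf x, x.1), f₂ (Lf x, x.2)))
      (by
        intro a ha b hb hab
        calc a = g (f₁ (Lf a, a.1), f₂ (Lf a, a.2)) := ha.symm
          _ = g (f₁ (Lf b, b.1), f₂ (Lf b, b.2)) := congrArg g hab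
          _ = b := hb)
    have hcard : ((Fintype.card (Fin M₁ × Fin M₂)) : ℝ) = (M₁ : ℝ) * M₂ := by
      simp
    rw [hcard] at key
    calc ∑' x, F₃ x ≤ ((M₁ : ℝ) * M₂) * (Real.exp (-γ) / ((M₁ : ℝ) * M₂)) := key
      _ = Real.exp (-γ) := by field_simp
  -- bound for F₁ (conditioning on x₂)
  have hswF₁ : Summable fun y : 𝒳₂ × 𝒳₁ => F₁ (y.2, y.1) :=
    hsF₁.comp_injective Prod.swap_injective
  have hcolF₁ : ∀ b : 𝒳₂, Summable fun a => F₁ (a, b) := fun b =>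
    hsF₁.comp_injective (fun a a' h => by simpa using congrArg Prod.fst h)
  have hswap : ∑' x, F₁ x = ∑' b, ∑' a, F₁ (a, b) := by
    calc ∑' x, F₁ x = ∑' y : 𝒳₂ × 𝒳₁, F₁ (y.2, y.1) :=
          ((Equiv.prodComm 𝒳₂ 𝒳₁).tsum_eq F₁).symm
      _ = ∑' b, ∑' a, F₁ (a, b) := Summable.tsum_prod' hswF₁ (fun b => hcolF₁ b)
  have hinner : ∀ b : 𝒳₂, ∑' a, F₁ (a, b) ≤ P2 b * Real.exp (-γ) := by
    intro b
    have hLM : (0 : ℝ) < (L : ℝ) * M₁ := by positivity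
    have hc0 : 0 ≤ P2 b * Real.exp (-γ) / ((L : ℝ) * M₁) :=
      div_nonneg (mul_nonneg (hP2nn b) (Real.exp_pos _).le) hLM.le
    have key := cf_count (fun a => F₁ (a, b))
      {a : 𝒳₁ | g (f₁ (Lf (a, b), a), f₂ (Lf (a, b), b)) = (a, b)}
      (by
        intro a ha
        rw [hF₁] at ha
        dsimp only at ha
        by_contra hmem
        exact ha (if_neg (fun hcond => hmem hcond.2)))
      (P2 b * Real.exp (-γ) / ((L : ℝ) * M₁)) hc0
      (by
        intro a
        rw [hF₁]
        dsimp only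
        split_ifs with h
        · rcases eq_or_lt_of_le (hP0 (a, b)) with h0 | h0
          · exact h0 ▸ hc0
          · exact cf_alg h0 hLM γ h.1 (hPle2 (a, b))
        · exact hc0)
      (fun a => (Lf (a, b), f₁ (Lf (a, b), a)))
      (by
        intro a ha a' ha' h
        have h1 : Lf (a, b) = Lf (a', b) := congrArg Prod.fst h
        have h2 : f₁ (Lf (a, b), a) = f₁ (Lf (a', b), a') := congrArg Prod.snd h
        have h3 : (a, b) = (a', b) := by
          calc (a, b) = g (f₁ (Lf (a, b), a), f₂ (Lf (a, b), b)) := ha.symm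
            _ = g (f₁ (Lf (a', b), a'), f₂ (Lf (a', b), b)) := by rw [h2, h1]
            _ = (a', b) := ha'
        exact (Prod.ext_iff.mp h3).1)
    have hcard : ((Fintype.card (Fin L × Fin M₁)) : ℝ) = (L : ℝ) * M₁ := by simp
    rw [hcard] at key
    calc ∑' a, F₁ (a, b)
        ≤ ((L : ℝ) * M₁) * (P2 b * Real.exp (-γ) / ((L : ℝ) * M₁)) := key
      _ = P2 b * Real.exp (-γ) := by field_simp
  have hsumInner : Summable fun b => ∑' a, F₁ (a, b) :=
    ((summable_prod_of_nonneg (fun y => hF₁nn (y.2, y.1))).mp hswF₁).2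
  have hP2sum : Summable P2 := by
    have h := ((summable_prod_of_nonneg (f := fun y : 𝒳₂ × 𝒳₁ => P (y.2, y.1))
      (fun y => hP0 _)).mp (hPs.comp_injective Prod.swap_injective)).2
    have hfun : P2 = fun b => ∑' a, P (a, b) := funext hP2
    rw [hfun]; exact h
  have hP2tsum : ∑' b, P2 b = 1 := by
    calc ∑' b, P2 b = ∑' b, ∑' a, P (a, b) := tsum_congr hP2
      _ = ∑' y : 𝒳₂ × 𝒳₁, P (y.2, y.1) :=
          (Summable.tsum_prod' (hPs.comp_injective Prod.swap_injective) (fun b => hcol b)).symm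
      _ = 1 := by rw [← hPsum]; exact (Equiv.prodComm 𝒳₂ 𝒳₁).tsum_eq P
  have hT1 : ∑' x, F₁ x ≤ Real.exp (-γ) := by
    rw [hswap]
    calc ∑' b, ∑' a, F₁ (a, b) ≤ ∑' b, P2 b * Real.exp (-γ) :=
        Summable.tsum_le_tsum hinner hsumInner (hP2sum.mul_right _)
      _ = Real.exp (-γ) := by rw [tsum_mul_right, hP2tsum, one_mul]
  -- bound for F₂ (conditioning on x₁)
  have hrowF₂ : ∀ a : 𝒳₁, Summable fun b => F₂ (a, b) := fun a =>
    hsF₂.comp_injective (fun b b' h => by simpa using congrArg Prod.snd h)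
  have hswap2 : ∑' x, F₂ x = ∑' a, ∑' b, F₂ (a, b) := Summable.tsum_prod' hsF₂ hrowF₂
  have hinner2 : ∀ a : 𝒳₁, ∑' b, F₂ (a, b) ≤ P1 a * Real.exp (-γ) := by
    intro a
    have hLM : (0 : ℝ) < (L : ℝ) * M₂ := by positivity
    have hc0 : 0 ≤ P1 a * Real.exp (-γ) / ((L : ℝ) * M₂) :=
      div_nonneg (mul_nonneg (hP1nn a) (Real.exp_pos _).le) hLM.le
    have key := cf_count (fun b => F₂ (a, b))
      {b : 𝒳₂ | g (f₁ (Lf (a, b), a), f₂ (Lf (a, b), b)) = (a, b)}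
      (by
        intro b hb
        rw [hF₂] at hb
        dsimp only at hb
        by_contra hmem
        exact hb (if_neg (fun hcond => hmem hcond.2)))
      (P1 a * Real.exp (-γ) / ((L : ℝ) * M₂)) hc0
      (by
        intro b
        rw [hF₂]
        dsimp only
        split_ifs with h
        · rcases eq_or_lt_of_le (hP0 (a, b)) with h0 | h0
          · exact h0 ▸ hc0
          · exact cf_alg h0 hLM γ h.1 (hPle1 (a, b))
        · exact hc0)
      (fun b => (Lf (a, b), f₂ (Lf (a, b), b)))
      (by
        intro b hb b' hb' h
        have h1 : Lf (a, b) = Lf (a, b') := congrArg Prod.fst h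
        have h2 : f₂ (Lf (a, b), b) = f₂ (Lf (a, b'), b') := congrArg Prod.snd h
        have h3 : (a, b) = (a, b') := by
          calc (a, b) = g (f₁ (Lf (a, b), a), f₂ (Lf (a, b), b)) := hb.symm
            _ = g (f₁ (Lf (a, b'), a), f₂ (Lf (a, b'), b')) := by rw [h2, h1]
            _ = (a, b') := hb'
        exact (Prod.ext_iff.mp h3).2)
    have hcard : ((Fintype.card (Fin L × Fin M₂)) : ℝ) = (L : ℝ) * M₂ := by simp
    rw [hcard] at key
    calc ∑' b, F₂ (a, b)
        ≤ ((L : ℝ) * M₂) * (P1 a * Real.exp (-γ) / ((L : ℝ) * M₂)) := key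
      _ = P1 a * Real.exp (-γ) := by field_simp
  have hsumInner2 : Summable fun a => ∑' b, F₂ (a, b) :=
    ((summable_prod_of_nonneg (fun x => hF₂nn x)).mp hsF₂).2
  have hP1sum : Summable P1 := by
    have h := ((summable_prod_of_nonneg (fun x => hP0 x)).mp hPs).2
    have hfun : P1 = fun a => ∑' b, P (a, b) := funext hP1
    rw [hfun]; exact h
  have hP1tsum : ∑' a, P1 a = 1 := by
    calc ∑' a, P1 a = ∑' a, ∑' b, P (a, b) := tsum_congr hP1
      _ = ∑' x : 𝒳₁ × 𝒳₂, P x := (Summable.tsum_prod' hPs hrow).symm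
      _ = 1 := hPsum
  have hT2 : ∑' x, F₂ x ≤ Real.exp (-γ) := by
    rw [hswap2]
    calc ∑' a, ∑' b, F₂ (a, b) ≤ ∑' a, P1 a * Real.exp (-γ) :=
        Summable.tsum_le_tsum hinner2 hsumInner2 (hP1sum.mul_right _)
      _ = Real.exp (-γ) := by rw [tsum_mul_right, hP1tsum, one_mul]
  -- assemble
  have hsA : Summable (fun x : 𝒳₁ × 𝒳₂ =>
      if (Real.log ((L : ℝ) * (M₁ : ℝ)) + γ ≤ Real.log (P2 x.2 / P x)
        ∨ Real.log ((L : ℝ) * (M₂ : ℝ)) + γ ≤ Real.log (P1 x.1 / P x)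
        ∨ Real.log ((M₁ : ℝ) * (M₂ : ℝ)) + γ ≤ Real.log (1 / P x))
      then P x else 0) := by
    apply hPs.of_nonneg_of_le
    · intro x; split_ifs; exacts [hP0 x, le_rfl]
    · intro x; split_ifs; exacts [le_rfl, hP0 x]
  have main : (∑' x : 𝒳₁ × 𝒳₂,
      if (Real.log ((L : ℝ) * (M₁ : ℝ)) + γ ≤ Real.log (P2 x.2 / P x)
        ∨ Real.log ((L : ℝ) * (M₂ : ℝ)) + γ ≤ Real.log (P1 x.1 / P x)
        ∨ Real.log ((M₁ : ℝ) * (M₂ : ℝ)) + γ ≤ Real.log (1 / P x))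
      then P x else 0) ≤ ε + 3 * Real.exp (-γ) := by
    calc (∑' x : 𝒳₁ × 𝒳₂,
        if (Real.log ((L : ℝ) * (M₁ : ℝ)) + γ ≤ Real.log (P2 x.2 / P x)
          ∨ Real.log ((L : ℝ) * (M₂ : ℝ)) + γ ≤ Real.log (P1 x.1 / P x)
          ∨ Real.log ((M₁ : ℝ) * (M₂ : ℝ)) + γ ≤ Real.log (1 / P x))
        then P x else 0)
        ≤ ∑' x, (E x + (F₁ x + (F₂ x + F₃ x))) :=
          Summable.tsum_le_tsum hpt hsA (hsE.add (hsF₁.add (hsF₂.add hsF₃)))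
      _ = (∑' x, E x) + ((∑' x, F₁ x) + ((∑' x, F₂ x) + (∑' x, F₃ x))) := by
          rw [Summable.tsum_add hsE (hsF₁.add (hsF₂.add hsF₃)), Summable.tsum_add hsF₁ (hsF₂.add hsF₃),
            Summable.tsum_add hsF₂ hsF₃]
      _ ≤ ε + 3 * Real.exp (-γ) := by linarith [hT1, hT2, hT3, hcode]
  linarith [main]
end

section
/- Exact MASC fundamental limit for a uniform (non-redundant) joint source: Let 𝒳₁ and 𝒳₂ be finite nonempty sets and let (X₁,X₂) be uniformly distributed over 𝒳₁ × 𝒳₂. Then for every ε ∈ (0,1) and all positive integers M₁, M₂, an (M₁, M₂, ε) MASC for (X₁,X₂) exists if and only if min{ 1, M₁/|𝒳₁| } · min{ 1, M₂/|𝒳₂| } ≥ 1 − ε; equivalently, the minimal error probability over all MASCs with code sizes (M₁,M₂) equals 1 − min{ 1, M₁/|𝒳₁| } · min{ 1, M₂/|𝒳₂| }. -/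
open Finset

private lemma fin_filter_lt_card (n M : ℕ) :
    (Finset.univ.filter fun i : Fin n => (i : ℕ) < M).card = min M n := by
  have h1 : Finset.image Fin.val (Finset.univ.filter fun i : Fin n => (i : ℕ) < M)
      = Finset.range (min M n) := by
    ext a
    simp only [Finset.mem_image, Finset.mem_filter, Finset.mem_univ, true_and,
      Finset.mem_range]
    constructor
    · rintro ⟨i, hi, rfl⟩; omega
    · intro ha; exact ⟨⟨a, by omega⟩, by simpa using (by omega : a < M), rfl⟩
  rw [← Finset.card_image_of_injective _ Fin.val_injective, h1, Finset.card_range]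

/-- **Exact MASC fundamental limit for a uniform (non-redundant) joint source.**
Let `(X₁,X₂)` be uniform on the finite set `𝒳₁ × 𝒳₂`. For every `ε ∈ (0,1)` and all
positive `M₁, M₂`, an `(M₁,M₂,ε)` MASC exists iff
`min{1, M₁/|𝒳₁|}·min{1, M₂/|𝒳₂|} ≥ 1 − ε`; equivalently, the minimal error probability
over all codes with sizes `(M₁,M₂)` equals `1 − min{1, M₁/|𝒳₁|}·min{1, M₂/|𝒳₂|}`. -/
theorem masc_uniform_source {𝒳₁ 𝒳₂ : Type*} [Fintype 𝒳₁] [Fintype 𝒳₂]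
    [Nonempty 𝒳₁] [Nonempty 𝒳₂] [DecidableEq 𝒳₁] [DecidableEq 𝒳₂]
    (ε : ℝ) (hε : ε ∈ Set.Ioo (0 : ℝ) 1)
    (M₁ M₂ : ℕ) (hM₁ : 0 < M₁) (hM₂ : 0 < M₂) :
    ((∃ f₁ : 𝒳₁ → Fin M₁, ∃ f₂ : 𝒳₂ → Fin M₂, ∃ g : Fin M₁ × Fin M₂ → 𝒳₁ × 𝒳₂,
        (∑ x : 𝒳₁ × 𝒳₂,
            if g (f₁ x.1, f₂ x.2) = x then (0 : ℝ)
            else 1 / ((Fintype.card 𝒳₁ : ℝ) * (Fintype.card 𝒳₂ : ℝ))) ≤ ε)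
      ↔ 1 - ε ≤ min 1 ((M₁ : ℝ) / (Fintype.card 𝒳₁ : ℝ))
                  * min 1 ((M₂ : ℝ) / (Fintype.card 𝒳₂ : ℝ))) ∧
    sInf {e : ℝ | ∃ f₁ : 𝒳₁ → Fin M₁, ∃ f₂ : 𝒳₂ → Fin M₂,
          ∃ g : Fin M₁ × Fin M₂ → 𝒳₁ × 𝒳₂,
            e = ∑ x : 𝒳₁ × 𝒳₂,
                if g (f₁ x.1, f₂ x.2) = x then (0 : ℝ)
                else 1 / ((Fintype.card 𝒳₁ : ℝ) * (Fintype.card 𝒳₂ : ℝ))}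
      = 1 - min 1 ((M₁ : ℝ) / (Fintype.card 𝒳₁ : ℝ))
            * min 1 ((M₂ : ℝ) / (Fintype.card 𝒳₂ : ℝ)) := by
  obtain ⟨hε0, hε1⟩ := hε
  set n₁ := Fintype.card 𝒳₁ with hn₁
  set n₂ := Fintype.card 𝒳₂ with hn₂
  have hn₁pos : 0 < n₁ := Fintype.card_pos
  have hn₂pos : 0 < n₂ := Fintype.card_pos
  have hn₁R : (0:ℝ) < (n₁:ℝ) := by exact_mod_cast hn₁pos
  have hn₂R : (0:ℝ) < (n₂:ℝ) := by exact_mod_cast hn₂pos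
  have hNpos : (0:ℝ) < (n₁:ℝ) * (n₂:ℝ) := by positivity
  set K := min M₁ n₁ * min M₂ n₂ with hK
  have hKN : K ≤ n₁ * n₂ := Nat.mul_le_mul (min_le_right _ _) (min_le_right _ _)
  -- real identity for the min expression
  have hmin1 : min 1 ((M₁ : ℝ) / (n₁:ℝ)) = ((min M₁ n₁ : ℕ) : ℝ) / (n₁:ℝ) := by
    rcases le_total M₁ n₁ with h | h
    · rw [min_eq_right (div_le_one_of_le₀ (by exact_mod_cast h) hn₁R.le),
        Nat.min_eq_left h]
    · rw [min_eq_left (by rw [le_div_iff₀ hn₁R, one_mul]; exact_mod_cast h),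
        Nat.min_eq_right h, div_self hn₁R.ne']
  have hmin2 : min 1 ((M₂ : ℝ) / (n₂:ℝ)) = ((min M₂ n₂ : ℕ) : ℝ) / (n₂:ℝ) := by
    rcases le_total M₂ n₂ with h | h
    · rw [min_eq_right (div_le_one_of_le₀ (by exact_mod_cast h) hn₂R.le),
        Nat.min_eq_left h]
    · rw [min_eq_left (by rw [le_div_iff₀ hn₂R, one_mul]; exact_mod_cast h),
        Nat.min_eq_right h, div_self hn₂R.ne']
  have hmin : min 1 ((M₁ : ℝ) / (n₁:ℝ)) * min 1 ((M₂ : ℝ) / (n₂:ℝ))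
      = (K : ℝ) / ((n₁:ℝ) * (n₂:ℝ)) := by
    rw [hmin1, hmin2, div_mul_div_comm, hK]; push_cast; ring_nf
  -- the error sum of any code
  have sum_eq : ∀ (f₁ : 𝒳₁ → Fin M₁) (f₂ : 𝒳₂ → Fin M₂) (g : Fin M₁ × Fin M₂ → 𝒳₁ × 𝒳₂),
      (∑ x : 𝒳₁ × 𝒳₂, if g (f₁ x.1, f₂ x.2) = x then (0 : ℝ)
          else 1 / ((n₁:ℝ) * (n₂:ℝ)))
      = ((n₁:ℝ) * (n₂:ℝ)
          - ((Finset.univ.filter fun x : 𝒳₁ × 𝒳₂ => g (f₁ x.1, f₂ x.2) = x).card : ℝ))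
        / ((n₁:ℝ) * (n₂:ℝ)) := by
    intro f₁ f₂ g
    rw [Finset.sum_ite, Finset.sum_const_zero, Finset.sum_const, zero_add, nsmul_eq_mul]
    have hadd := Finset.card_filter_add_card_filter_not
      (s := (Finset.univ : Finset (𝒳₁ × 𝒳₂)))
      (p := fun x : 𝒳₁ × 𝒳₂ => g (f₁ x.1, f₂ x.2) = x)
    have hcu : (Finset.univ : Finset (𝒳₁ × 𝒳₂)).card = n₁ * n₂ := by
      simp [Finset.card_univ, Fintype.card_prod, hn₁, hn₂]
    have : ((Finset.univ.filter fun x : 𝒳₁ × 𝒳₂ => ¬ g (f₁ x.1, f₂ x.2) = x).card : ℝ)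
        = (n₁:ℝ) * (n₂:ℝ)
          - ((Finset.univ.filter fun x : 𝒳₁ × 𝒳₂ => g (f₁ x.1, f₂ x.2) = x).card : ℝ) := by
      rw [hcu] at hadd
      have := congrArg (Nat.cast : ℕ → ℝ) hadd
      push_cast at this
      linarith
    rw [this]; field_simp
  -- converse: the number of correctly decoded pairs is at most K
  have card_le : ∀ (f₁ : 𝒳₁ → Fin M₁) (f₂ : 𝒳₂ → Fin M₂) (g : Fin M₁ × Fin M₂ → 𝒳₁ × 𝒳₂),
      (Finset.univ.filter fun x : 𝒳₁ × 𝒳₂ => g (f₁ x.1, f₂ x.2) = x).card ≤ K := by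
    intro f₁ f₂ g
    set C := Finset.univ.filter fun x : 𝒳₁ × 𝒳₂ => g (f₁ x.1, f₂ x.2) = x with hC
    have memC : ∀ x : 𝒳₁ × 𝒳₂, x ∈ (C : Set (𝒳₁ × 𝒳₂)) → g (f₁ x.1, f₂ x.2) = x := by
      intro x hx; exact (Finset.mem_filter.mp (Finset.mem_coe.mp hx)).2
    have h1n : C.card ≤ M₁ * n₂ := by
      have := Finset.card_le_card_of_injOn (fun x : 𝒳₁ × 𝒳₂ => (f₁ x.1, x.2))
        (fun x _ => Finset.mem_univ _)
        (by
          intro x hx y hy hxy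
          have hx' := memC x hx
          have hy' := memC y hy
          simp only [Prod.mk.injEq] at hxy
          obtain ⟨h1, h2⟩ := hxy
          have : g (f₁ x.1, f₂ x.2) = g (f₁ y.1, f₂ y.2) := by rw [h1, h2]
          rw [hx', hy'] at this; exact this)
      simpa [Finset.card_univ, Fintype.card_prod, hn₂] using this
    have hn2 : C.card ≤ n₁ * M₂ := by
      have := Finset.card_le_card_of_injOn (fun x : 𝒳₁ × 𝒳₂ => (x.1, f₂ x.2))
        (fun x _ => Finset.mem_univ _)
        (by
          intro x hx y hy hxy
          have hx' := memC x hx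
          have hy' := memC y hy
          simp only [Prod.mk.injEq] at hxy
          obtain ⟨h1, h2⟩ := hxy
          have : g (f₁ x.1, f₂ x.2) = g (f₁ y.1, f₂ y.2) := by rw [h1, h2]
          rw [hx', hy'] at this; exact this)
      simpa [Finset.card_univ, Fintype.card_prod, hn₁] using this
    have h12 : C.card ≤ M₁ * M₂ := by
      have := Finset.card_le_card_of_injOn (fun x : 𝒳₁ × 𝒳₂ => (f₁ x.1, f₂ x.2))
        (fun x _ => Finset.mem_univ _)
        (by
          intro x hx y hy hxy
          have hx' := memC x hx
          have hy' := memC y hy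
          simp only [Prod.mk.injEq] at hxy
          obtain ⟨h1, h2⟩ := hxy
          have : g (f₁ x.1, f₂ x.2) = g (f₁ y.1, f₂ y.2) := by rw [h1, h2]
          rw [hx', hy'] at this; exact this)
      simpa [Finset.card_univ, Fintype.card_prod] using this
    have hnn : C.card ≤ n₁ * n₂ := by
      have := Finset.card_le_univ C
      simpa [Finset.card_univ, Fintype.card_prod, hn₁, hn₂] using this
    rw [hK]
    rcases min_cases M₁ n₁ with ⟨e1, _⟩ | ⟨e1, _⟩ <;>
      rcases min_cases M₂ n₂ with ⟨e2, _⟩ | ⟨e2, _⟩ <;> rw [e1, e2] <;> assumption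
  -- converse bound on the error
  have converse : ∀ (f₁ : 𝒳₁ → Fin M₁) (f₂ : 𝒳₂ → Fin M₂) (g : Fin M₁ × Fin M₂ → 𝒳₁ × 𝒳₂),
      1 - (K : ℝ) / ((n₁:ℝ) * (n₂:ℝ))
        ≤ ∑ x : 𝒳₁ × 𝒳₂, if g (f₁ x.1, f₂ x.2) = x then (0 : ℝ)
            else 1 / ((n₁:ℝ) * (n₂:ℝ)) := by
    intro f₁ f₂ g
    rw [sum_eq f₁ f₂ g, sub_div, div_self hNpos.ne']
    have hR : ((Finset.univ.filter fun x : 𝒳₁ × 𝒳₂ => g (f₁ x.1, f₂ x.2) = x).card : ℝ)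
        / ((n₁:ℝ) * (n₂:ℝ)) ≤ (K : ℝ) / ((n₁:ℝ) * (n₂:ℝ)) := by
      gcongr
      exact_mod_cast card_le f₁ f₂ g
    linarith
  -- achievability: a code attaining error exactly 1 - K/N
  obtain ⟨F₁, F₂, G, hach⟩ :
      ∃ f₁ : 𝒳₁ → Fin M₁, ∃ f₂ : 𝒳₂ → Fin M₂, ∃ g : Fin M₁ × Fin M₂ → 𝒳₁ × 𝒳₂,
        (∑ x : 𝒳₁ × 𝒳₂, if g (f₁ x.1, f₂ x.2) = x then (0 : ℝ)
            else 1 / ((n₁:ℝ) * (n₂:ℝ)))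
        = 1 - (K : ℝ) / ((n₁:ℝ) * (n₂:ℝ)) := by
    have e₁ : 𝒳₁ ≃ Fin n₁ := Fintype.equivFin 𝒳₁
    have e₂ : 𝒳₂ ≃ Fin n₂ := Fintype.equivFin 𝒳₂
    set F₁ : 𝒳₁ → Fin M₁ := fun x => ⟨min (e₁ x) (M₁ - 1), by omega⟩ with hF₁
    set F₂ : 𝒳₂ → Fin M₂ := fun x => ⟨min (e₂ x) (M₂ - 1), by omega⟩ with hF₂
    set G : Fin M₁ × Fin M₂ → 𝒳₁ × 𝒳₂ := fun p =>
      (e₁.symm ⟨min p.1 (n₁ - 1), by omega⟩, e₂.symm ⟨min p.2 (n₂ - 1), by omega⟩) with hG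
    refine ⟨F₁, F₂, G, ?_⟩
    rw [sum_eq F₁ F₂ G]
    have hP : ∀ x : 𝒳₁ × 𝒳₂,
        (G (F₁ x.1, F₂ x.2) = x) ↔ (((e₁ x.1 : ℕ) < M₁) ∧ ((e₂ x.2 : ℕ) < M₂)) := by
      intro x
      have ha := (e₁ x.1).is_lt
      have hb := (e₂ x.2).is_lt
      rw [hG, hF₁, hF₂]
      simp only [Prod.ext_iff, Equiv.symm_apply_eq, Fin.ext_iff, Fin.val_mk]
      omega
    have hfilter : (Finset.univ.filter fun x : 𝒳₁ × 𝒳₂ => G (F₁ x.1, F₂ x.2) = x).card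
        = K := by
      have heq : (Finset.univ.filter fun x : 𝒳₁ × 𝒳₂ => G (F₁ x.1, F₂ x.2) = x)
          = (Finset.univ.filter fun x₁ : 𝒳₁ => (e₁ x₁ : ℕ) < M₁)
            ×ˢ (Finset.univ.filter fun x₂ : 𝒳₂ => (e₂ x₂ : ℕ) < M₂) := by
        ext x
        simp only [Finset.mem_filter, Finset.mem_univ, true_and, Finset.mem_product]
        exact hP x
      have hc1 : (Finset.univ.filter fun x₁ : 𝒳₁ => (e₁ x₁ : ℕ) < M₁).card = min M₁ n₁ := by
        rw [← Fintype.card_subtype]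
        have hcongr : Fintype.card {x : 𝒳₁ // (e₁ x : ℕ) < M₁}
            = Fintype.card {i : Fin n₁ // (i : ℕ) < M₁} :=
          Fintype.card_congr (e₁.subtypeEquiv fun a => Iff.rfl)
        rw [hcongr, Fintype.card_subtype, fin_filter_lt_card]
      have hc2 : (Finset.univ.filter fun x₂ : 𝒳₂ => (e₂ x₂ : ℕ) < M₂).card = min M₂ n₂ := by
        rw [← Fintype.card_subtype]
        have hcongr : Fintype.card {x : 𝒳₂ // (e₂ x : ℕ) < M₂}
            = Fintype.card {i : Fin n₂ // (i : ℕ) < M₂} :=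
          Fintype.card_congr (e₂.subtypeEquiv fun a => Iff.rfl)
        rw [hcongr, Fintype.card_subtype, fin_filter_lt_card]
      rw [heq, Finset.card_product, hc1, hc2, hK]
    rw [hfilter, sub_div, div_self hNpos.ne']
  -- assemble
  constructor
  · rw [hmin]
    constructor
    · rintro ⟨f₁, f₂, g, hle⟩
      have := converse f₁ f₂ g
      linarith
    · intro h
      exact ⟨F₁, F₂, G, by rw [hach]; linarith⟩
  · rw [hmin]
    apply le_antisymm
    · apply csInf_le
      · exact ⟨1 - (K : ℝ) / ((n₁:ℝ) * (n₂:ℝ)), by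
          rintro e ⟨f₁, f₂, g, rfl⟩; exact converse f₁ f₂ g⟩
      · exact ⟨F₁, F₂, G, hach.symm⟩
    · refine le_csInf ⟨1 - (K : ℝ) / ((n₁:ℝ) * (n₂:ℝ)), F₁, F₂, G, hach.symm⟩ ?_
      rintro e ⟨f₁, f₂, g, rfl⟩
      exact converse f₁ f₂ g
end
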